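/- arXiv:math/0401184 — 7 statements merged into one kernel-verified Lean document; each statement's English description precedes it below -/
import Mathlib

section
/- Let (X, μ) be a measure space with μ finite, let k : X → ℕ be measurable with k(x) ≥ 1 for all x, let t_j : X → ℕ (j ∈ ℕ) be measurable with t_0(x) = 0 and t_{j-1}(x) < t_j(x) for all j ≥ 1 and all x, and set τ(x) = t_{k(x)}(x). Assume: (24) there exist an integer L ≥ 1 and ε > 0 such that for every j ≥ 1 and every tuple of naturals n_1 < ⋯ < n_{j-1}, writing E = {x : t_i(x) = n_i for all 1 ≤ i ≤ j-1, and k(x) ≥ j}, one has μ{x ∈ E : k(x) ≤ j+L-1} ≥ ε·μ(E); and (25) there exists C > 0 such that for every j ≥ 0, every n ≥ 1 and every tuple (n_1, …, n_j), writing F = {x : t_i(x) = n_i for all 1 ≤ i ≤ j}, one has μ{x ∈ F : t_{j+1}(x) − t_j(x) > n} ≤ C·e^{−c n^η}·μ(F), where c > 0 and η ∈ (0,1] are fixed. Then there exist c' > 0 and C₁ > 0 such that μ{x : τ(x) > n} ≤ C₁·e^{−c' n^η} for all n ≥ 1. -/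
/-!
Split `{τ > n}` according to whether `k > qL` or `k ≤ qL`, where `q ≈ δ n^η`.
Conditioning (24) on the values of `t_1, …, t_{j-1}` gives `μ{k ≥ j + L} ≤ (1 - ε) μ{k ≥ j}`,
so `μ{k > qL}` decays geometrically in `q`. If `k ≤ qL`, then `n < t_{qL}` and, `x ↦ x^η` being
subadditive, `n^η < W_{qL} := ∑_{i < qL} (t_{i+1} - t_i)^η`. Conditioning (25) on the values of
`t_1, …, t_j` bounds `∫ e^{(c/2)(t_{j+1} - t_j)^η}` by `D μ` on each cylinder, hence
`∫ e^{(c/2) W_p} ≤ D^p μ(X)`, and Chernoff's bound gives `μ{W_{qL} > n^η} ≤ e^{-(c/2) n^η} D^{qL}`.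
For `δ` small enough, both terms are `O(e^{-c' n^η})`.
-/

open MeasureTheory Real
open scoped ENNReal

lemma summable_exp_neg_mul_rpow {b η : ℝ} (hb : 0 < b) (hη : 0 < η) :
    Summable fun n : ℕ => exp (-b * (n : ℝ) ^ η) := by
  refine summable_of_isBigO_nat (Real.summable_nat_rpow.mpr (by norm_num : (-2 : ℝ) < -1)) ?_
  have hlim : Filter.Tendsto (fun n : ℕ => (n : ℝ) ^ η) Filter.atTop Filter.atTop :=
    (tendsto_rpow_atTop hη).comp tendsto_natCast_atTop_atTop
  refine ((isLittleO_exp_neg_mul_rpow_atTop hb (-2 / η)).comp_tendsto hlim).isBigO.congr_right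
    fun n => ?_
  rw [Function.comp_apply, ← rpow_mul n.cast_nonneg, mul_div_cancel₀ _ hη.ne']

lemma exists_pow_add_exp_mul_pow_le {θ D a : ℝ} (hθ0 : 0 < θ) (hθ1 : θ < 1) (hD : 0 < D)
    (ha : 0 < a) (L : ℕ) :
    ∃ c' > 0, ∃ K > 0, ∀ s : ℝ, 0 ≤ s → ∃ q : ℕ,
      θ ^ q + exp (-a * s) * D ^ (q * L) ≤ K * exp (-c' * s) := by
  set ℓ := L * |log D|
  set δ := a / (2 * (ℓ + 1))
  have hδ : 0 < δ := by positivity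
  -- `δ` is small enough that `D ^ (q * L) ≤ e^ℓ e^{a s / 2}` for `q = ⌈δ s⌉`
  have hℓδ : ℓ * δ ≤ a / 2 := by
    rw [mul_div_assoc', div_le_div_iff₀ (by positivity) two_pos]
    nlinarith
  have hlogθ : log θ < 0 := log_neg hθ0 hθ1
  set c' := min (-log θ * δ) (a / 2)
  have hc'θ : c' ≤ -log θ * δ := min_le_left _ _
  have hc'a : c' ≤ a / 2 := min_le_right _ _
  refine ⟨c', lt_min (mul_pos (neg_pos.2 hlogθ) hδ) (half_pos ha), 1 + exp ℓ, by positivity,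
    fun s hs => ⟨⌈δ * s⌉₊, ?_⟩⟩
  set q := ⌈δ * s⌉₊
  have hq : δ * s ≤ q := Nat.le_ceil _
  have hq' : (q : ℝ) < δ * s + 1 := Nat.ceil_lt_add_one (by positivity)
  have hθq : θ ^ q ≤ exp (-c' * s) := by
    rw [← rpow_natCast, rpow_def_of_pos hθ0, exp_le_exp]
    nlinarith [mul_le_mul_of_nonpos_left hq hlogθ.le, mul_le_mul_of_nonneg_right hc'θ hs]
  have hDq : exp (-a * s) * D ^ (q * L) ≤ exp ℓ * exp (-c' * s) := by
    have hlogD : log D * ↑(q * L) ≤ ℓ * q :=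
      calc log D * ↑(q * L) ≤ |log D| * ↑(q * L) := by gcongr; exact le_abs_self _
        _ = ℓ * q := by push_cast; ring
    rw [← rpow_natCast, rpow_def_of_pos hD, ← exp_add, ← exp_add, exp_le_exp]
    nlinarith [mul_le_mul_of_nonneg_left hq'.le (by positivity : 0 ≤ ℓ),
      mul_le_mul_of_nonneg_right hℓδ hs, mul_le_mul_of_nonneg_right hc'a hs]
  linarith

section Fiber

variable {X β : Type*} [MeasurableSpace X] [MeasurableSpace β] [Countable β]
  [MeasurableSingletonClass β] {μ : Measure X} {Φ : X → β}

lemma lintegral_eq_tsum_fiber (hΦ : Measurable Φ) (f : X → ℝ≥0∞) :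
    ∫⁻ x, f x ∂μ = ∑' b, ∫⁻ x in Φ ⁻¹' {b}, f x ∂μ := by
  rw [← lintegral_iUnion (fun b => hΦ (measurableSet_singleton b)) (pairwise_disjoint_fiber Φ),
    ← Set.preimage_iUnion, Set.iUnion_of_singleton, Set.preimage_univ, Measure.restrict_univ]

lemma lintegral_le_mul_of_forall_fiber (hΦ : Measurable Φ) {f g : X → ℝ≥0∞} {r : ℝ≥0∞}
    (h : ∀ y, ∫⁻ x in Φ ⁻¹' {Φ y}, f x ∂μ ≤ r * ∫⁻ x in Φ ⁻¹' {Φ y}, g x ∂μ) :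
    ∫⁻ x, f x ∂μ ≤ r * ∫⁻ x, g x ∂μ := by
  rw [lintegral_eq_tsum_fiber hΦ f, lintegral_eq_tsum_fiber hΦ g, ← ENNReal.tsum_mul_left]
  refine ENNReal.tsum_le_tsum fun b => ?_
  rcases (Φ ⁻¹' {b}).eq_empty_or_nonempty with hb | ⟨y, rfl⟩
  · simp [hb]
  · exact h y

lemma measure_le_mul_of_forall_fiber (hΦ : Measurable Φ) {A B : Set X} (hA : MeasurableSet A)
    (hB : MeasurableSet B) {r : ℝ≥0∞}
    (h : ∀ y, μ (Φ ⁻¹' {Φ y} ∩ A) ≤ r * μ (Φ ⁻¹' {Φ y} ∩ B)) : μ A ≤ r * μ B := by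
  rw [← lintegral_indicator_one hA, ← lintegral_indicator_one hB]
  refine lintegral_le_mul_of_forall_fiber hΦ fun y => ?_
  simpa only [lintegral_indicator_one hA, lintegral_indicator_one hB, Measure.restrict_apply hA,
    Measure.restrict_apply hB, Set.inter_comm A, Set.inter_comm B] using h y

lemma lintegral_mul_le_of_forall_fiber (hΦ : Measurable Φ) {G H : X → ℝ≥0∞} (hH : Measurable H)
    {r : ℝ≥0∞} (hG : ∀ x y, Φ x = Φ y → G x = G y)
    (hHr : ∀ y, ∫⁻ x in Φ ⁻¹' {Φ y}, H x ∂μ ≤ r * μ (Φ ⁻¹' {Φ y})) :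
    ∫⁻ x, G x * H x ∂μ ≤ r * ∫⁻ x, G x ∂μ := by
  refine lintegral_le_mul_of_forall_fiber hΦ fun y => ?_
  have hGy : ∀ x ∈ Φ ⁻¹' {Φ y}, G x = G y := fun x hx => hG x y hx
  have hF := hΦ (measurableSet_singleton (Φ y))
  calc ∫⁻ x in Φ ⁻¹' {Φ y}, G x * H x ∂μ = G y * ∫⁻ x in Φ ⁻¹' {Φ y}, H x ∂μ := by
        rw [← lintegral_const_mul _ hH]
        exact setLIntegral_congr_fun hF fun x hx => by rw [hGy x hx]
    _ ≤ G y * (r * μ (Φ ⁻¹' {Φ y})) := by gcongr; exact hHr y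
    _ = r * ∫⁻ x in Φ ⁻¹' {Φ y}, G x ∂μ := by
        rw [setLIntegral_congr_fun hF hGy, setLIntegral_const]
        ring

end Fiber

section Moments

variable {X : Type*} [MeasurableSpace X] {μ : Measure X}

lemma measure_lt_le_exp_mul_lintegral_exp {f : X → ℝ} (hf : Measurable f) {a : ℝ} (ha : 0 ≤ a)
    (s : ℝ) :
    μ {x | s < f x} ≤
      ENNReal.ofReal (exp (-a * s)) * ∫⁻ x, ENNReal.ofReal (exp (a * f x)) ∂μ := by
  rw [← lintegral_const_mul _ (by fun_prop)]
  calc μ {x | s < f x}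
      ≤ μ {x | 1 ≤ ENNReal.ofReal (exp (-a * s)) * ENNReal.ofReal (exp (a * f x))} := by
        refine measure_mono fun x (hx : s < f x) => ?_
        rw [Set.mem_ofPred_eq, ← ENNReal.ofReal_mul (exp_pos _).le, ← exp_add,
          ← ENNReal.ofReal_one]
        exact ENNReal.ofReal_le_ofReal (one_le_exp (by nlinarith))
    _ ≤ _ := by simpa using mul_meas_ge_le_lintegral₀ (by fun_prop) 1

/-- The truncated subtraction `n - 1` gives the terms `n = 0` and `n = 1` the same weight. -/
noncomputable def expMomentConst (a b C η : ℝ) : ℝ :=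
  ∑' n : ℕ, exp a * max C 1 * exp (-b * ((n - 1 : ℕ) : ℝ) ^ η)

lemma summable_expMomentConst {a b C η : ℝ} (hb : 0 < b) (hη : 0 < η) :
    Summable fun n : ℕ => exp a * max C 1 * exp (-b * ((n - 1 : ℕ) : ℝ) ^ η) :=
  ((summable_nat_add_iff 1).mp
    ((summable_exp_neg_mul_rpow hb hη).congr fun n => by rw [Nat.add_sub_cancel])).mul_left _

lemma expMomentConst_pos {a b C η : ℝ} (hb : 0 < b) (hη : 0 < η) :
    0 < expMomentConst a b C η :=
  (summable_expMomentConst hb hη).tsum_pos (fun _ => by positivity) 0 (by positivity)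

lemma setLIntegral_exp_rpow_le {s : Set X} (hs : MeasurableSet s) {g : X → ℕ}
    (hg : Measurable g) {a b C η : ℝ} (ha : 0 ≤ a) (hb : 0 < b) (hC : 0 ≤ C) (hη0 : 0 < η)
    (hη1 : η ≤ 1)
    (htail : ∀ m : ℕ, 1 ≤ m →
      μ (s ∩ {x | m < g x}) ≤ ENNReal.ofReal (C * exp (-(a + b) * (m : ℝ) ^ η)) * μ s) :
    ∫⁻ x in s, ENNReal.ofReal (exp (a * (g x : ℝ) ^ η)) ∂μ ≤
      ENNReal.ofReal (expMomentConst a b C η) * μ s := by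
  rw [lintegral_eq_tsum_fiber hg, expMomentConst,
    ENNReal.ofReal_tsum_of_nonneg (fun _ => by positivity) (summable_expMomentConst hb hη0),
    ← ENNReal.tsum_mul_right]
  refine ENNReal.tsum_le_tsum fun n => ?_
  rw [Measure.restrict_restrict (hg (measurableSet_singleton n)),
    setLIntegral_congr_fun ((hg (measurableSet_singleton n)).inter hs)
      (fun x hx => by rw [show g x = n from hx.1]), setLIntegral_const]
  rcases le_or_gt n 1 with hn | hn
  · have hpow : (n : ℝ) ^ η ≤ 1 := rpow_le_one n.cast_nonneg (by exact_mod_cast hn) hη0.le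
    rw [show n - 1 = 0 by omega, Nat.cast_zero, zero_rpow hη0.ne', mul_zero, exp_zero, mul_one]
    gcongr
    · calc exp (a * (n : ℝ) ^ η) ≤ exp a := exp_le_exp.mpr (by nlinarith)
        _ ≤ exp a * max C 1 := le_mul_of_one_le_right (exp_pos a).le (le_max_right C 1)
    · exact Set.inter_subset_right
  · obtain ⟨m, rfl⟩ : ∃ m, n = m + 1 := ⟨n - 1, by omega⟩
    have hsub : g ⁻¹' {m + 1} ∩ s ⊆ s ∩ {x | m < g x} := fun x ⟨hx, hxs⟩ =>
      ⟨hxs, by rw [Set.mem_ofPred_eq, show g x = m + 1 from hx]; omega⟩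
    have hrpow : ((m + 1 : ℕ) : ℝ) ^ η ≤ (m : ℝ) ^ η + 1 := by
      push_cast
      simpa using rpow_add_le_add_rpow m.cast_nonneg zero_le_one hη0.le hη1
    calc ENNReal.ofReal (exp (a * ((m + 1 : ℕ) : ℝ) ^ η)) * μ (g ⁻¹' {m + 1} ∩ s)
        ≤ ENNReal.ofReal (exp (a * ((m + 1 : ℕ) : ℝ) ^ η)) *
            (ENNReal.ofReal (C * exp (-(a + b) * (m : ℝ) ^ η)) * μ s) := by
          gcongr
          exact (measure_mono hsub).trans (htail m (by omega))
      _ ≤ ENNReal.ofReal (exp a * max C 1 * exp (-b * ((m + 1 - 1 : ℕ) : ℝ) ^ η)) * μ s := by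
          rw [← mul_assoc, ← ENNReal.ofReal_mul (exp_pos _).le, Nat.add_sub_cancel]
          gcongr ENNReal.ofReal ?_ * _
          calc exp (a * ((m + 1 : ℕ) : ℝ) ^ η) * (C * exp (-(a + b) * (m : ℝ) ^ η))
              ≤ exp (a * ((m : ℝ) ^ η + 1)) * (max C 1 * exp (-(a + b) * (m : ℝ) ^ η)) := by
                gcongr
                exact le_max_left C 1
            _ = max C 1 * (exp (a * ((m : ℝ) ^ η + 1)) * exp (-(a + b) * (m : ℝ) ^ η)) := by
                ring
            _ = exp a * max C 1 * exp (-b * (m : ℝ) ^ η) := by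
                rw [← exp_add, mul_comm (exp a), mul_assoc, ← exp_add]
                ring_nf

end Moments

section ReturnTimes

variable {X : Type*} {t : ℕ → X → ℕ}

def pastTimes (t : ℕ → X → ℕ) (p : ℕ) (x : X) : Fin p → ℕ := fun i => t (i + 1) x

def pastCylinder (t : ℕ → X → ℕ) (p : ℕ) (y : X) : Set X :=
  {x | ∀ i, 1 ≤ i → i ≤ p → t i x = t i y}

lemma preimage_pastTimes_singleton (t : ℕ → X → ℕ) (p : ℕ) (y : X) :
    pastTimes t p ⁻¹' {pastTimes t p y} = pastCylinder t p y := by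
  ext x
  simp only [Set.mem_preimage, Set.mem_singleton_iff, funext_iff, pastTimes, pastCylinder]
  refine ⟨fun h i hi hip => ?_, fun h i => h _ (by omega) i.isLt⟩
  simpa [Nat.sub_add_cancel hi] using h ⟨i - 1, by omega⟩

noncomputable def gapRpowSum (t : ℕ → X → ℕ) (η : ℝ) (p : ℕ) (x : X) : ℝ :=
  ∑ i ∈ Finset.range p, ((t (i + 1) x - t i x : ℕ) : ℝ) ^ η

lemma gapRpowSum_eq_of_pastTimes_eq (ht0 : ∀ x, t 0 x = 0) (η : ℝ) {p : ℕ} {x y : X}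
    (h : pastTimes t p x = pastTimes t p y) : gapRpowSum t η p x = gapRpowSum t η p y := by
  have hxy : ∀ i ≤ p, t i x = t i y := by
    rintro (_ | i) hi
    · rw [ht0, ht0]
    · exact congrFun h ⟨i, hi⟩
  refine Finset.sum_congr rfl fun i hi => ?_
  rw [Finset.mem_range] at hi
  rw [hxy i hi.le, hxy (i + 1) hi]

lemma rpow_le_gapRpowSum (ht0 : ∀ x, t 0 x = 0) (hmono : ∀ x, Monotone (t · x)) {η : ℝ}
    (hη0 : 0 < η) (hη1 : η ≤ 1) (p : ℕ) (x : X) : (t p x : ℝ) ^ η ≤ gapRpowSum t η p x := by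
  induction p with
  | zero => simp [gapRpowSum, ht0, zero_rpow hη0.ne']
  | succ p ih =>
    have hsplit : (t (p + 1) x : ℝ) = t p x + ((t (p + 1) x - t p x : ℕ) : ℝ) := by
      rw [Nat.cast_sub (hmono x p.le_succ)]
      ring
    rw [gapRpowSum, Finset.sum_range_succ, ← gapRpowSum, hsplit]
    exact (rpow_add_le_add_rpow (by positivity) (by positivity) hη0.le hη1).trans (by gcongr)

lemma setOf_lt_apply_subset_union (ht0 : ∀ x, t 0 x = 0) (hmono : ∀ x, Monotone (t · x))
    {η : ℝ} (hη0 : 0 < η) (hη1 : η ≤ 1) (k : X → ℕ) (n q L : ℕ) :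
    {x | n < t (k x) x} ⊆
      {x | 1 + q * L ≤ k x} ∪ {x | (n : ℝ) ^ η < gapRpowSum t η (q * L) x} := by
  intro x (hx : n < t (k x) x)
  by_cases hk : k x ≤ q * L
  · right
    exact (rpow_lt_rpow n.cast_nonneg (by exact_mod_cast hx.trans_le (hmono x hk)) hη0).trans_le
      (rpow_le_gapRpowSum ht0 hmono hη0 hη1 _ x)
  · left
    show 1 + q * L ≤ k x
    omega

variable [MeasurableSpace X] {μ : Measure X}

lemma measurable_pastTimes (ht : ∀ j, Measurable (t j)) (p : ℕ) : Measurable (pastTimes t p) :=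
  measurable_pi_lambda _ fun _ => ht _

lemma measurableSet_pastCylinder (ht : ∀ j, Measurable (t j)) (p : ℕ) (y : X) :
    MeasurableSet (pastCylinder t p y) :=
  preimage_pastTimes_singleton t p y ▸ measurable_pastTimes ht p (measurableSet_singleton _)

lemma measurable_gapRpowSum (ht : ∀ j, Measurable (t j)) (η : ℝ) (p : ℕ) :
    Measurable (gapRpowSum t η p) :=
  Finset.measurable_sum _ fun _ _ =>
    (measurable_from_nat (f := fun n : ℕ => (n : ℝ) ^ η)).comp ((ht _).sub (ht _))

lemma measure_add_le_le_one_sub_mul [IsFiniteMeasure μ] {k : X → ℕ} (hk : Measurable k)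
    (ht : ∀ j, Measurable (t j)) {j L : ℕ} (hj : 1 ≤ j) {r : ℝ≥0∞}
    (h : ∀ y, r * μ (pastCylinder t (j - 1) y ∩ {x | j ≤ k x}) ≤
      μ (pastCylinder t (j - 1) y ∩ {x | j ≤ k x} ∩ {x | k x ≤ j + L - 1})) :
    μ {x | j + L ≤ k x} ≤ (1 - r) * μ {x | j ≤ k x} := by
  refine measure_le_mul_of_forall_fiber (measurable_pastTimes ht (j - 1))
    (measurableSet_le measurable_const hk) (measurableSet_le measurable_const hk) fun y => ?_
  rw [preimage_pastTimes_singleton]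
  set E := pastCylinder t (j - 1) y ∩ {x | j ≤ k x}
  have hdiff : pastCylinder t (j - 1) y ∩ {x | j + L ≤ k x} =
      E \ (E ∩ {x | k x ≤ j + L - 1}) := by
    ext x
    by_cases hx : x ∈ pastCylinder t (j - 1) y <;> simp only [E, hx, Set.mem_inter_iff,
      Set.mem_sdiff, Set.mem_ofPred_eq, true_and, false_and, not_and, not_le]
    omega
  have hmeas : MeasurableSet (E ∩ {x | k x ≤ j + L - 1}) :=
    ((measurableSet_pastCylinder ht _ y).inter (measurableSet_le measurable_const hk)).inter
      (measurableSet_le hk measurable_const)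
  rw [hdiff, measure_sdiff Set.inter_subset_left hmeas.nullMeasurableSet (measure_ne_top _ _),
    ENNReal.sub_mul fun _ _ => measure_ne_top _ _, one_mul]
  exact tsub_le_tsub_left (h y) _

lemma measure_one_add_mul_le_le_one_sub_pow_mul [IsFiniteMeasure μ] {k : X → ℕ}
    (hk : Measurable k) (ht : ∀ j, Measurable (t j)) {L : ℕ} {r : ℝ≥0∞}
    (h : ∀ j, 1 ≤ j → ∀ y, r * μ (pastCylinder t (j - 1) y ∩ {x | j ≤ k x}) ≤
      μ (pastCylinder t (j - 1) y ∩ {x | j ≤ k x} ∩ {x | k x ≤ j + L - 1})) (q : ℕ) :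
    μ {x | 1 + q * L ≤ k x} ≤ (1 - r) ^ q * μ Set.univ := by
  induction q with
  | zero => simpa using measure_mono (Set.subset_univ _)
  | succ q ih =>
    calc μ {x | 1 + (q + 1) * L ≤ k x} = μ {x | 1 + q * L + L ≤ k x} := by ring_nf
      _ ≤ (1 - r) * μ {x | 1 + q * L ≤ k x} :=
        measure_add_le_le_one_sub_mul hk ht (by omega) (h _ (by omega))
      _ ≤ (1 - r) ^ (q + 1) * μ Set.univ := by
        rw [pow_succ', mul_assoc]
        gcongr

lemma lintegral_exp_gapRpowSum_le (ht : ∀ j, Measurable (t j)) (ht0 : ∀ x, t 0 x = 0)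
    {a η : ℝ} {D : ℝ≥0∞}
    (h : ∀ j y, ∫⁻ x in pastCylinder t j y,
      ENNReal.ofReal (exp (a * ((t (j + 1) x - t j x : ℕ) : ℝ) ^ η)) ∂μ ≤
        D * μ (pastCylinder t j y)) (p : ℕ) :
    ∫⁻ x, ENNReal.ofReal (exp (a * gapRpowSum t η p x)) ∂μ ≤ D ^ p * μ Set.univ := by
  induction p with
  | zero => simp [gapRpowSum]
  | succ p ih =>
    have hsplit : ∀ x, ENNReal.ofReal (exp (a * gapRpowSum t η (p + 1) x)) =
        ENNReal.ofReal (exp (a * gapRpowSum t η p x)) *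
          ENNReal.ofReal (exp (a * ((t (p + 1) x - t p x : ℕ) : ℝ) ^ η)) := fun x => by
      rw [gapRpowSum, Finset.sum_range_succ, ← gapRpowSum, mul_add, exp_add,
        ENNReal.ofReal_mul (exp_pos _).le]
    simp_rw [hsplit]
    calc _ ≤ D * ∫⁻ x, ENNReal.ofReal (exp (a * gapRpowSum t η p x)) ∂μ :=
          lintegral_mul_le_of_forall_fiber (measurable_pastTimes ht p) (by fun_prop)
            (fun x y hxy => by rw [gapRpowSum_eq_of_pastTimes_eq ht0 η hxy])
            (fun y => by rw [preimage_pastTimes_singleton]; exact h p y)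
      _ ≤ D * (D ^ p * μ Set.univ) := by gcongr
      _ = D ^ (p + 1) * μ Set.univ := by ring

lemma toReal_measure_lt_apply_le [IsFiniteMeasure μ] (ht : ∀ j, Measurable (t j))
    (ht0 : ∀ x, t 0 x = 0) (hmono : ∀ x, Monotone (t · x)) {k : X → ℕ} {L : ℕ}
    {θ D a η : ℝ} (hθ : 0 ≤ θ) (hD : 0 ≤ D) (ha : 0 ≤ a) (hη0 : 0 < η) (hη1 : η ≤ 1)
    (hdecay : ∀ q, μ {x | 1 + q * L ≤ k x} ≤ ENNReal.ofReal θ ^ q * μ Set.univ)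
    (hmoment : ∀ p, ∫⁻ x, ENNReal.ofReal (exp (a * gapRpowSum t η p x)) ∂μ ≤
      ENNReal.ofReal D ^ p * μ Set.univ) (n q : ℕ) :
    (μ {x | n < t (k x) x}).toReal ≤
      (θ ^ q + exp (-a * (n : ℝ) ^ η) * D ^ (q * L)) * (μ Set.univ).toReal := by
  have hle : μ {x | n < t (k x) x} ≤
      ENNReal.ofReal (θ ^ q + exp (-a * (n : ℝ) ^ η) * D ^ (q * L)) * μ Set.univ :=
    calc μ {x | n < t (k x) x}
        ≤ μ {x | 1 + q * L ≤ k x} + μ {x | (n : ℝ) ^ η < gapRpowSum t η (q * L) x} :=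
          (measure_mono (setOf_lt_apply_subset_union ht0 hmono hη0 hη1 k n q L)).trans
            (measure_union_le _ _)
      _ ≤ ENNReal.ofReal θ ^ q * μ Set.univ + ENNReal.ofReal (exp (-a * (n : ℝ) ^ η)) *
            (ENNReal.ofReal D ^ (q * L) * μ Set.univ) :=
          add_le_add (hdecay q) ((measure_lt_le_exp_mul_lintegral_exp
            (measurable_gapRpowSum ht η _) ha _).trans (by gcongr; exact hmoment _))
      _ = _ := by
          rw [ENNReal.ofReal_add (by positivity) (by positivity),
            ENNReal.ofReal_mul (by positivity), ENNReal.ofReal_pow hθ, ENNReal.ofReal_pow hD]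
          ring
  have := ENNReal.toReal_mono (by finiteness) hle
  rwa [ENNReal.toReal_mul, ENNReal.toReal_ofReal (by positivity)] at this

end ReturnTimes

theorem tail_estimate_stretched_exponential_general
    {X : Type*} [MeasurableSpace X] (μ : Measure X) [IsFiniteMeasure μ]
    (k : X → ℕ) (hk : Measurable k)
    (t : ℕ → X → ℕ) (ht : ∀ j, Measurable (t j))
    (ht0 : ∀ x, t 0 x = 0) (htmono : ∀ j : ℕ, 1 ≤ j → ∀ x, t (j - 1) x < t j x)
    (τ : X → ℕ) (hτ : ∀ x, τ x = t (k x) x)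
    (L : ℕ) (ε : ℝ) (hε : 0 < ε)
    (h24 : ∀ j : ℕ, 1 ≤ j → ∀ n : ℕ → ℕ, StrictMonoOn n (Set.Icc 1 (j - 1)) →
      ε * (μ {x | (∀ i, 1 ≤ i → i ≤ j - 1 → t i x = n i) ∧ j ≤ k x}).toReal ≤
        (μ {x | ((∀ i, 1 ≤ i → i ≤ j - 1 → t i x = n i) ∧ j ≤ k x) ∧
          k x ≤ j + L - 1}).toReal)
    (c η : ℝ) (hc : 0 < c) (hη0 : 0 < η) (hη1 : η ≤ 1)
    (C : ℝ) (hC : 0 < C)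
    (h25 : ∀ j : ℕ, ∀ n : ℕ, 1 ≤ n → ∀ ν : ℕ → ℕ,
      (μ {x | (∀ i, 1 ≤ i → i ≤ j → t i x = ν i) ∧ n < t (j + 1) x - t j x}).toReal ≤
        C * Real.exp (-c * (n : ℝ) ^ η) *
          (μ {x | ∀ i, 1 ≤ i → i ≤ j → t i x = ν i}).toReal) :
    ∃ c' > 0, ∃ C₁ > 0, ∀ n : ℕ, 1 ≤ n →
      (μ {x | n < τ x}).toReal ≤ C₁ * Real.exp (-c' * (n : ℝ) ^ η) := by
  have hstrict : ∀ x, StrictMono (t · x) := fun x =>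
    strictMono_nat_of_lt_succ fun j => by simpa using htmono (j + 1) (by omega) x
  set ε₀ := min ε 2⁻¹
  have hε₀ : 0 < ε₀ := lt_min hε (by norm_num)
  have hθ : 0 < 1 - ε₀ := sub_pos.2 ((min_le_right _ _).trans_lt (by norm_num))
  have hdecay : ∀ q, μ {x | 1 + q * L ≤ k x} ≤ ENNReal.ofReal (1 - ε₀) ^ q * μ Set.univ := by
    rw [ENNReal.ofReal_sub 1 hε₀.le, ENNReal.ofReal_one]
    refine measure_one_add_mul_le_le_one_sub_pow_mul hk ht fun j hj y => ?_
    rw [← ENNReal.toReal_le_toReal (by finiteness) (measure_ne_top _ _), ENNReal.toReal_mul,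
      ENNReal.toReal_ofReal hε₀.le]
    exact (mul_le_mul_of_nonneg_right (min_le_left _ _) ENNReal.toReal_nonneg).trans
      (h24 j hj (t · y) ((hstrict y).strictMonoOn _))
  set D := expMomentConst (c / 2) (c / 2) C η
  have hD : 0 < D := expMomentConst_pos (half_pos hc) hη0
  have hmoment : ∀ p, ∫⁻ x, ENNReal.ofReal (exp (c / 2 * gapRpowSum t η p x)) ∂μ ≤
      ENNReal.ofReal D ^ p * μ Set.univ :=
    lintegral_exp_gapRpowSum_le ht ht0 fun j y =>
      setLIntegral_exp_rpow_le (measurableSet_pastCylinder ht j y) ((ht (j + 1)).sub (ht j))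
        (half_pos hc).le (half_pos hc) hC.le hη0 hη1 fun m hm => by
          rw [add_halves, ← ENNReal.toReal_le_toReal (measure_ne_top _ _) (by finiteness),
            ENNReal.toReal_mul, ENNReal.toReal_ofReal (by positivity)]
          exact h25 j m hm (t · y)
  obtain ⟨c', hc', K, hK, hbound⟩ :=
    exists_pow_add_exp_mul_pow_le hθ (by linarith) hD (half_pos hc) L
  refine ⟨c', hc', K * ((μ Set.univ).toReal + 1), by positivity, fun n _ => ?_⟩
  obtain ⟨q, hq⟩ := hbound ((n : ℝ) ^ η) (by positivity)
  simp only [hτ]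
  calc _ ≤ _ := toReal_measure_lt_apply_le ht ht0 (fun x => (hstrict x).monotone) hθ.le hD.le
        (half_pos hc).le hη0 hη1 hdecay hmoment n q
    _ ≤ K * exp (-c' * (n : ℝ) ^ η) * (μ Set.univ).toReal := by gcongr
    _ ≤ K * ((μ Set.univ).toReal + 1) * exp (-c' * (n : ℝ) ^ η) := by
        nlinarith [exp_pos (-c' * (n : ℝ) ^ η)]

/-- Lemma 4.2 of Gouëzel, "Decay of correlations for nonuniformly expanding systems",
stretched exponential case `u_n = e^{-c n^η}`. -/
theorem tail_estimate_stretched_exponential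
    {X : Type*} [MeasurableSpace X] (μ : Measure X) [IsFiniteMeasure μ]
    (k : X → ℕ) (hk : Measurable k) (hk1 : ∀ x, 1 ≤ k x)
    (t : ℕ → X → ℕ) (ht : ∀ j, Measurable (t j))
    (ht0 : ∀ x, t 0 x = 0) (htmono : ∀ j : ℕ, 1 ≤ j → ∀ x, t (j - 1) x < t j x)
    (τ : X → ℕ) (hτ : ∀ x, τ x = t (k x) x)
    (L : ℕ) (hL : 1 ≤ L) (ε : ℝ) (hε : 0 < ε)
    (h24 : ∀ j : ℕ, 1 ≤ j → ∀ n : ℕ → ℕ, StrictMonoOn n (Set.Icc 1 (j - 1)) →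
      ε * (μ {x | (∀ i, 1 ≤ i → i ≤ j - 1 → t i x = n i) ∧ j ≤ k x}).toReal ≤
        (μ {x | ((∀ i, 1 ≤ i → i ≤ j - 1 → t i x = n i) ∧ j ≤ k x) ∧
          k x ≤ j + L - 1}).toReal)
    (c η : ℝ) (hc : 0 < c) (hη0 : 0 < η) (hη1 : η ≤ 1)
    (C : ℝ) (hC : 0 < C)
    (h25 : ∀ j : ℕ, ∀ n : ℕ, 1 ≤ n → ∀ ν : ℕ → ℕ,
      (μ {x | (∀ i, 1 ≤ i → i ≤ j → t i x = ν i) ∧ n < t (j + 1) x - t j x}).toReal ≤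
        C * Real.exp (-c * (n : ℝ) ^ η) *
          (μ {x | ∀ i, 1 ≤ i → i ≤ j → t i x = ν i}).toReal) :
    ∃ c' > 0, ∃ C₁ > 0, ∀ n : ℕ, 1 ≤ n →
      (μ {x | n < τ x}).toReal ≤ C₁ * Real.exp (-c' * (n : ℝ) ^ η) :=
  tail_estimate_stretched_exponential_general μ k hk t ht ht0 htmono τ hτ L ε hε h24 c η hc hη0 hη1
    C hC h25
end

section
/- Let (X, μ) be a measure space with μ finite, let k : X → ℕ be measurable with k(x) ≥ 1 for all x, let t_j : X → ℕ (j ∈ ℕ) be measurable with t_0(x) = 0 and t_{j-1}(x) < t_j(x) for all j ≥ 1 and all x. Assume there exist an integer L ≥ 1 and ε > 0 such that for every j ≥ 1 and every tuple of naturals n_1 < ⋯ < n_{j-1}, writing E = {x : t_i(x) = n_i for all 1 ≤ i ≤ j-1, and k(x) ≥ j}, one has μ{x ∈ E : k(x) ≤ j+L-1} ≥ ε·μ(E). Then for every m ∈ ℕ, μ{x : k(x) > m·L} ≤ (1−ε)^m·μ(X). -/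
open MeasureTheory

/-- Geometric bound on the number of inducing steps before return, from the proof of
Lemma 4.2 of Gouëzel, "Decay of correlations for nonuniformly expanding systems". -/
theorem geometric_bound_on_return_index
    {X : Type*} [MeasurableSpace X] (μ : Measure X) [IsFiniteMeasure μ]
    (k : X → ℕ) (hk : Measurable k) (hk1 : ∀ x, 1 ≤ k x)
    (t : ℕ → X → ℕ) (ht : ∀ j, Measurable (t j))
    (ht0 : ∀ x, t 0 x = 0) (htmono : ∀ j : ℕ, 1 ≤ j → ∀ x, t (j - 1) x < t j x)
    (L : ℕ) (hL : 1 ≤ L) (ε : ℝ) (hε : 0 < ε)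
    (h24 : ∀ j : ℕ, 1 ≤ j → ∀ n : ℕ → ℕ, StrictMonoOn n (Set.Icc 1 (j - 1)) →
      ε * (μ {x | (∀ i, 1 ≤ i → i ≤ j - 1 → t i x = n i) ∧ j ≤ k x}).toReal ≤
        (μ {x | ((∀ i, 1 ≤ i → i ≤ j - 1 → t i x = n i) ∧ j ≤ k x) ∧
          k x ≤ j + L - 1}).toReal) :
    ∀ m : ℕ, (μ {x | m * L < k x}).toReal ≤ (1 - ε) ^ m * (μ Set.univ).toReal := by
  intro m
  rcases le_or_gt ε 1 with hε1 | hε1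
  swap
  · -- if ε > 1, the measure must be zero
    have h0 := h24 1 le_rfl id (by simp [StrictMonoOn])
    have huniv : {x : X | (∀ i, 1 ≤ i → i ≤ 1 - 1 → t i x = id i) ∧ 1 ≤ k x} = Set.univ := by
      ext x
      simp only [Set.mem_setOf_eq, Set.mem_univ, iff_true]
      exact ⟨fun i h1 h2 => by omega, hk1 x⟩
    rw [huniv] at h0
    have hle : (μ {x : X | ((∀ i, 1 ≤ i → i ≤ 1 - 1 → t i x = id i) ∧ 1 ≤ k x) ∧
          k x ≤ 1 + L - 1}).toReal ≤ (μ (Set.univ : Set X)).toReal := by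
      apply ENNReal.toReal_mono (measure_ne_top μ _)
      exact measure_mono (Set.subset_univ _)
    have hz : (μ (Set.univ : Set X)).toReal = 0 := by
      have hnn : 0 ≤ (μ (Set.univ : Set X)).toReal := ENNReal.toReal_nonneg
      nlinarith
    have hAz : (μ {x | m * L < k x}).toReal ≤ 0 := by
      rw [← hz]
      exact ENNReal.toReal_mono (measure_ne_top μ _) (measure_mono (Set.subset_univ _))
    calc (μ {x | m * L < k x}).toReal ≤ 0 := hAz
      _ ≤ (1 - ε) ^ m * (μ Set.univ).toReal := by
          rw [hz]; ring_nf; exact le_rfl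
  · have h1ε : (0:ℝ) ≤ 1 - ε := by linarith
    set A : ℕ → Set X := fun m => {x | m * L < k x} with hA
    have hAmeas : ∀ m, MeasurableSet (A m) :=
      fun m => measurableSet_lt measurable_const hk
    have key : ∀ m, μ (A (m + 1)) ≤ ENNReal.ofReal (1 - ε) * μ (A m) := by
      intro m
      set E : (Fin (m * L) → ℕ) → Set X :=
        fun v => {x | (∀ i : Fin (m * L), t (i.val + 1) x = v i) ∧ m * L + 1 ≤ k x} with hE
      set F : (Fin (m * L) → ℕ) → Set X :=
        fun v => E v ∩ {x | (m + 1) * L < k x} with hF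
      have hEmeas : ∀ v, MeasurableSet (E v) := by
        intro v
        have : E v = (⋂ i : Fin (m * L), {x | t (i.val + 1) x = v i}) ∩
            {x | m * L + 1 ≤ k x} := by
          ext x; simp [hE, Set.mem_iInter, and_comm]
        rw [this]
        refine (MeasurableSet.iInter fun i => ?_).inter (measurableSet_le measurable_const hk)
        exact (ht (i.val + 1)) (measurableSet_singleton (v i))
      have hFmeas : ∀ v, MeasurableSet (F v) :=
        fun v => (hEmeas v).inter (measurableSet_lt measurable_const hk)
      have hEdisj : Pairwise (Function.onFun Disjoint E) := by
        intro v w hvw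
        refine Set.disjoint_left.2 fun x hxv hxw => hvw ?_
        funext i
        rw [← hxv.1 i, ← hxw.1 i]
      have hFdisj : Pairwise (Function.onFun Disjoint F) := by
        intro v w hvw
        exact Disjoint.mono Set.inter_subset_left Set.inter_subset_left (hEdisj hvw)
      have hEunion : A m = ⋃ v, E v := by
        ext x
        simp only [hA, Set.mem_setOf_eq, Set.mem_iUnion, hE]
        constructor
        · intro hx
          exact ⟨fun i => t (i.val + 1) x, fun i => rfl, by omega⟩
        · rintro ⟨v, _, hv2⟩; omega
      have hFunion : A (m + 1) = ⋃ v, F v := by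
        ext x
        simp only [hA, Set.mem_setOf_eq, Set.mem_iUnion, hF, hE, Set.mem_inter_iff]
        constructor
        · intro hx
          refine ⟨fun i => t (i.val + 1) x, ⟨fun i => rfl, ?_⟩, hx⟩
          have : m * L + L ≤ k x := by
            have : (m + 1) * L = m * L + L := by ring
            omega
          omega
        · rintro ⟨v, _, hv2⟩; exact hv2
      have hkey : ∀ v, μ (F v) ≤ ENNReal.ofReal (1 - ε) * μ (E v) := by
        intro v
        by_cases hne : (E v).Nonempty
        · obtain ⟨x₀, hx₀⟩ := hne
          set j := m * L + 1 with hj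
          have hj1 : 1 ≤ j := by omega
          have hsm : StrictMono (fun i => t i x₀) := by
            apply strictMono_nat_of_lt_succ
            intro i
            have := htmono (i + 1) (by omega) x₀
            simpa using this
          have happ := h24 j hj1 (fun i => t i x₀) (hsm.strictMonoOn _)
          have hSE : {x | (∀ i, 1 ≤ i → i ≤ j - 1 → t i x = t i x₀) ∧ j ≤ k x} = E v := by
            ext x
            simp only [Set.mem_setOf_eq, hE, hj]
            constructor
            · rintro ⟨h1, h2⟩
              refine ⟨fun i => ?_, h2⟩
              have hi : i.val + 1 ≤ m * L + 1 - 1 := by omega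
              rw [h1 (i.val + 1) (by omega) hi, hx₀.1 i]
            · rintro ⟨h1, h2⟩
              refine ⟨fun i hi1 hi2 => ?_, h2⟩
              have hi : i - 1 < m * L := by omega
              have := h1 ⟨i - 1, hi⟩
              have h0 := hx₀.1 ⟨i - 1, hi⟩
              simp only at this h0
              have hieq : i - 1 + 1 = i := by omega
              rw [hieq] at this h0
              rw [this, h0]
          have hSF : {x | ((∀ i, 1 ≤ i → i ≤ j - 1 → t i x = t i x₀) ∧ j ≤ k x) ∧
              k x ≤ j + L - 1} = E v ∩ {x | k x ≤ (m + 1) * L} := by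
            rw [← hSE]
            ext x
            simp only [Set.mem_setOf_eq, Set.mem_inter_iff, hj]
            constructor
            · rintro ⟨h1, h2⟩
              refine ⟨h1, ?_⟩
              have : (m + 1) * L = m * L + L := by ring
              omega
            · rintro ⟨h1, h2⟩
              refine ⟨h1, ?_⟩
              have : (m + 1) * L = m * L + L := by ring
              omega
          rw [hSE, hSF] at happ
          have hsplit : (μ (E v)).toReal =
              (μ (E v ∩ {x | k x ≤ (m + 1) * L})).toReal + (μ (F v)).toReal := by
            have hdiff : F v = E v \ {x | k x ≤ (m + 1) * L} := by
              ext x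
              simp only [hF, Set.mem_inter_iff, Set.mem_diff, Set.mem_setOf_eq, not_le]
            rw [hdiff]
            rw [← ENNReal.toReal_add (measure_ne_top μ _) (measure_ne_top μ _)]
            rw [measure_inter_add_diff _ (measurableSet_le hk measurable_const)]
          have hFle : (μ (F v)).toReal ≤ (1 - ε) * (μ (E v)).toReal := by nlinarith
          calc μ (F v) = ENNReal.ofReal (μ (F v)).toReal :=
                (ENNReal.ofReal_toReal (measure_ne_top μ _)).symm
            _ ≤ ENNReal.ofReal ((1 - ε) * (μ (E v)).toReal) := ENNReal.ofReal_le_ofReal hFle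
            _ = ENNReal.ofReal (1 - ε) * ENNReal.ofReal (μ (E v)).toReal :=
                ENNReal.ofReal_mul h1ε
            _ = ENNReal.ofReal (1 - ε) * μ (E v) := by
                rw [ENNReal.ofReal_toReal (measure_ne_top μ _)]
        · have hEempty : E v = ∅ := Set.not_nonempty_iff_eq_empty.1 hne
          have hFempty : F v = ∅ := by
            simp [hF, hEempty]
          simp [hEempty, hFempty]
      calc μ (A (m + 1)) = ∑' v, μ (F v) := by
            rw [hFunion, measure_iUnion hFdisj hFmeas]
        _ ≤ ∑' v, ENNReal.ofReal (1 - ε) * μ (E v) := ENNReal.tsum_le_tsum hkey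
        _ = ENNReal.ofReal (1 - ε) * ∑' v, μ (E v) := ENNReal.tsum_mul_left
        _ = ENNReal.ofReal (1 - ε) * μ (A m) := by
            rw [hEunion, measure_iUnion hEdisj hEmeas]
    have main : ∀ m, μ (A m) ≤ ENNReal.ofReal (1 - ε) ^ m * μ Set.univ := by
      intro m
      induction m with
      | zero => simpa using measure_mono (Set.subset_univ (A 0))
      | succ n ih =>
        calc μ (A (n + 1)) ≤ ENNReal.ofReal (1 - ε) * μ (A n) := key n
          _ ≤ ENNReal.ofReal (1 - ε) * (ENNReal.ofReal (1 - ε) ^ n * μ Set.univ) := by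
              gcongr
          _ = ENNReal.ofReal (1 - ε) ^ (n + 1) * μ Set.univ := by ring
    have hfin : (ENNReal.ofReal (1 - ε) ^ m * μ Set.univ) ≠ ⊤ :=
      ENNReal.mul_ne_top (ENNReal.pow_ne_top ENNReal.ofReal_ne_top) (measure_ne_top μ _)
    calc (μ (A m)).toReal ≤ (ENNReal.ofReal (1 - ε) ^ m * μ Set.univ).toReal :=
          ENNReal.toReal_mono hfin (main m)
      _ = (1 - ε) ^ m * (μ Set.univ).toReal := by
          rw [ENNReal.toReal_mul, ENNReal.toReal_pow, ENNReal.toReal_ofReal h1ε]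
end

section
/- Let (X, μ) be a measure space with μ finite, let k : X → ℕ be measurable with k(x) ≥ 1 for all x, let t_j : X → ℕ (j ∈ ℕ) be measurable with t_0(x) = 0 and t_{j-1}(x) < t_j(x) for all j ≥ 1 and all x. Assume there is a sequence (v_n)_{n≥1} of nonnegative reals such that for every j ≥ 1, every n ≥ 1 and every tuple of naturals (n_1, …, n_{j-1}), one has μ{x : t_i(x) = n_i for all 1 ≤ i ≤ j-1, and t_j(x) − t_{j-1}(x) = n} ≤ v_n·μ{x : t_i(x) = n_i for all 1 ≤ i ≤ j-1}. Then for every m ≥ 1, every nonempty finite set A ⊆ {1, …, m}, and every family of naturals (n_j)_{j∈A} with n_j ≥ 1, one has μ{x : k(x) ≥ max A and t_j(x) − t_{j-1}(x) = n_j for all j ∈ A} ≤ (∏_{j∈A} v_{n_j})·μ(X). -/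
/-!
Remove the largest index `J` of `A`. Partition the space according to the values of
`t₀, …, t_{J-1}`: this is a countable partition, each nonempty cell is one of the sets in the
gap hypothesis (as `t₀ = 0`), and the remaining gap conditions, indexed by `A \ {J}`, are
constant on each cell. Applying the hypothesis cell by cell and summing
therefore costs exactly one factor `v (n J)`, and induction on `A` finishes the proof.
-/

open MeasureTheory Set
open scoped ENNReal

section Fiberwise

variable {X ι : Type*} [MeasurableSpace X] [MeasurableSpace ι] [MeasurableSingletonClass ι]
  [Countable ι] {μ : Measure X} {f : X → ι} {T : Set X} {c : ℝ≥0∞}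

lemma measure_inter_preimage_le_of_forall_fiber (hf : Measurable f)
    (h : ∀ d, μ (T ∩ f ⁻¹' {d}) ≤ c * μ (f ⁻¹' {d})) (s : Set ι) :
    μ (T ∩ f ⁻¹' s) ≤ c * μ (f ⁻¹' s) :=
  calc μ (T ∩ f ⁻¹' s) = μ (⋃ d : s, T ∩ f ⁻¹' {(d : ι)}) := by
        rw [← inter_iUnion, ← preimage_iUnion, iUnion_of_singleton_coe]
    _ ≤ ∑' d : s, μ (T ∩ f ⁻¹' {(d : ι)}) := measure_iUnion_le _
    _ ≤ ∑' d : s, c * μ (f ⁻¹' {(d : ι)}) := ENNReal.tsum_le_tsum fun d => h d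
    _ = c * μ (f ⁻¹' s) := by
        rw [ENNReal.tsum_mul_left, tsum_measure_preimage_singleton s.to_countable
          fun _ _ => hf (measurableSet_singleton _)]

lemma measure_inter_le_of_forall_fiber (hf : Measurable f)
    (h : ∀ d, μ (T ∩ f ⁻¹' {d}) ≤ c * μ (f ⁻¹' {d})) {S : Set X}
    (hS : ∀ x y, f x = f y → x ∈ S → y ∈ S) :
    μ (T ∩ S) ≤ c * μ S := by
  have hS_sat : S = f ⁻¹' (f '' S) := by
    refine (subset_preimage_image f S).antisymm ?_
    rintro y ⟨x, hx, hxy⟩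
    exact hS x y hxy hx
  rw [hS_sat]
  exact measure_inter_preimage_le_of_forall_fiber hf h _

end Fiberwise

def gapSet {X : Type*} (t : ℕ → X → ℕ) (n : ℕ → ℕ) (A : Finset ℕ) : Set X :=
  {x | ∀ j ∈ A, t j x - t (j - 1) x = n j}

section Gaps

variable {X : Type*} [MeasurableSpace X] {μ : Measure X} {t : ℕ → X → ℕ} {n : ℕ → ℕ}

lemma measure_gapSet_insert_le (ht : ∀ j, Measurable (t j)) (ht0 : ∀ x, t 0 x = 0)
    {B : Finset ℕ} {J : ℕ} (hB : ∀ j ∈ B, j < J) {c : ℝ≥0∞}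
    (hc : ∀ ν : ℕ → ℕ, μ {x | (∀ i, 1 ≤ i → i ≤ J - 1 → t i x = ν i) ∧
        t J x - t (J - 1) x = n J} ≤ c * μ {x | ∀ i, 1 ≤ i → i ≤ J - 1 → t i x = ν i}) :
    μ (gapSet t n (insert J B)) ≤ c * μ (gapSet t n B) := by
  let f : X → (Fin J → ℕ) := fun x i => t i x
  have hf : Measurable f := measurable_pi_lambda _ fun i => ht i
  have h_insert : gapSet t n (insert J B) = {x | t J x - t (J - 1) x = n J} ∩ gapSet t n B := by
    ext x
    simp only [gapSet, Finset.forall_mem_insert, mem_inter_iff, mem_ofPred_eq]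
  rw [h_insert]
  refine measure_inter_le_of_forall_fiber hf (fun d => ?_) ?_
  · rcases (f ⁻¹' {d}).eq_empty_or_nonempty with h_empty | ⟨x₀, rfl⟩
    · simp [h_empty]
    · have h_fiber : f ⁻¹' {f x₀} = {x | ∀ i, 1 ≤ i → i ≤ J - 1 → t i x = t i x₀} := by
        ext x
        simp only [mem_preimage, mem_singleton_iff, funext_iff, Fin.forall_iff, mem_ofPred_eq, f]
        constructor
        · exact fun h i hi₁ hi₂ => h i (by omega)
        · rintro h (_ | i) hi
          · rw [ht0, ht0]
          · exact h _ (by omega) (by omega)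
      rw [h_fiber, inter_comm]
      exact hc _
  · intro x y hxy hx j hj
    have h_eq (i : ℕ) (hi : i < J) : t i x = t i y := congrFun hxy ⟨i, hi⟩
    have hjJ := hB j hj
    rw [← h_eq j hjJ, ← h_eq (j - 1) (by omega)]
    exact hx j hj

lemma measure_gapSet_le_prod (ht : ∀ j, Measurable (t j)) (ht0 : ∀ x, t 0 x = 0)
    (c : ℕ → ℝ≥0∞) (A : Finset ℕ)
    (hc : ∀ j ∈ A, ∀ ν : ℕ → ℕ, μ {x | (∀ i, 1 ≤ i → i ≤ j - 1 → t i x = ν i) ∧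
        t j x - t (j - 1) x = n j} ≤ c j * μ {x | ∀ i, 1 ≤ i → i ≤ j - 1 → t i x = ν i}) :
    μ (gapSet t n A) ≤ (∏ j ∈ A, c j) * μ univ := by
  induction A using Finset.induction_on_max with
  | empty => simp [gapSet]
  | insert J B hB ih =>
    rw [Finset.prod_insert fun hJ => (hB J hJ).false, mul_assoc]
    calc μ (gapSet t n (insert J B)) ≤ c J * μ (gapSet t n B) :=
          measure_gapSet_insert_le ht ht0 hB (hc J (B.mem_insert_self J))
      _ ≤ c J * ((∏ j ∈ B, c j) * μ univ) := by
          gcongr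
          exact ih fun j hj => hc j (Finset.mem_insert_of_mem hj)

end Gaps

theorem product_bound_on_gaps_general
    {X : Type*} [MeasurableSpace X] (μ : Measure X) [IsFiniteMeasure μ]
    (k : X → ℕ)
    (t : ℕ → X → ℕ) (ht : ∀ j, Measurable (t j))
    (ht0 : ∀ x, t 0 x = 0)
    (v : ℕ → ℝ) (hv : ∀ n, 1 ≤ n → 0 ≤ v n)
    (hgap : ∀ j : ℕ, 1 ≤ j → ∀ n : ℕ, 1 ≤ n → ∀ ν : ℕ → ℕ,
      (μ {x | (∀ i, 1 ≤ i → i ≤ j - 1 → t i x = ν i) ∧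
          t j x - t (j - 1) x = n}).toReal ≤
        v n * (μ {x | ∀ i, 1 ≤ i → i ≤ j - 1 → t i x = ν i}).toReal)
    (m : ℕ) (A : Finset ℕ) (hA : A.Nonempty) (hAm : A ⊆ Finset.Icc 1 m)
    (n : ℕ → ℕ) (hn : ∀ j ∈ A, 1 ≤ n j) :
    (μ {x | A.max' hA ≤ k x ∧ ∀ j ∈ A, t j x - t (j - 1) x = n j}).toReal ≤
      (∏ j ∈ A, v (n j)) * (μ Set.univ).toReal := by
  have hv' (j : ℕ) (hj : j ∈ A) : 0 ≤ v (n j) := hv _ (hn j hj)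
  have hgap' (j : ℕ) (hj : j ∈ A) (ν : ℕ → ℕ) :
      μ {x | (∀ i, 1 ≤ i → i ≤ j - 1 → t i x = ν i) ∧ t j x - t (j - 1) x = n j} ≤
        ENNReal.ofReal (v (n j)) * μ {x | ∀ i, 1 ≤ i → i ≤ j - 1 → t i x = ν i} := by
    refine ((ENNReal.le_ofReal_iff_toReal_le (measure_ne_top _ _) ?_).2
      (hgap j (Finset.mem_Icc.1 (hAm hj)).1 _ (hn j hj) ν)).trans_eq ?_
    · exact mul_nonneg (hv' j hj) ENNReal.toReal_nonneg
    · rw [ENNReal.ofReal_mul (hv' j hj), ENNReal.ofReal_toReal (measure_ne_top _ _)]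
  have h_bound : μ {x | A.max' hA ≤ k x ∧ ∀ j ∈ A, t j x - t (j - 1) x = n j} ≤
      (∏ j ∈ A, ENNReal.ofReal (v (n j))) * μ univ :=
    (measure_mono fun _ hx => hx.2).trans (measure_gapSet_le_prod ht ht0 _ A hgap')
  calc (μ {x | A.max' hA ≤ k x ∧ ∀ j ∈ A, t j x - t (j - 1) x = n j}).toReal
      ≤ ((∏ j ∈ A, ENNReal.ofReal (v (n j))) * μ univ).toReal :=
        ENNReal.toReal_mono (ENNReal.mul_ne_top (ENNReal.prod_ne_top fun _ _ => ENNReal.ofReal_ne_top)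
          (measure_ne_top _ _)) h_bound
    _ = (∏ j ∈ A, v (n j)) * (μ univ).toReal := by
        rw [ENNReal.toReal_mul, ENNReal.toReal_prod,
          Finset.prod_congr rfl fun j hj => ENNReal.toReal_ofReal (hv' j hj)]

/-- Product bound on the probability of prescribed gaps between candidate return times,
an intermediate claim in the proof of Lemma 4.2 of Gouëzel, "Decay of correlations for
nonuniformly expanding systems". -/
theorem product_bound_on_gaps
    {X : Type*} [MeasurableSpace X] (μ : Measure X) [IsFiniteMeasure μ]
    (k : X → ℕ) (hk : Measurable k) (hk1 : ∀ x, 1 ≤ k x)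
    (t : ℕ → X → ℕ) (ht : ∀ j, Measurable (t j))
    (ht0 : ∀ x, t 0 x = 0) (htmono : ∀ j : ℕ, 1 ≤ j → ∀ x, t (j - 1) x < t j x)
    (v : ℕ → ℝ) (hv : ∀ n, 1 ≤ n → 0 ≤ v n)
    (hgap : ∀ j : ℕ, 1 ≤ j → ∀ n : ℕ, 1 ≤ n → ∀ ν : ℕ → ℕ,
      (μ {x | (∀ i, 1 ≤ i → i ≤ j - 1 → t i x = ν i) ∧
          t j x - t (j - 1) x = n}).toReal ≤
        v n * (μ {x | ∀ i, 1 ≤ i → i ≤ j - 1 → t i x = ν i}).toReal)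
    (m : ℕ) (hm : 1 ≤ m) (A : Finset ℕ) (hA : A.Nonempty) (hAm : A ⊆ Finset.Icc 1 m)
    (n : ℕ → ℕ) (hn : ∀ j ∈ A, 1 ≤ n j) :
    (μ {x | A.max' hA ≤ k x ∧ ∀ j ∈ A, t j x - t (j - 1) x = n j}).toReal ≤
      (∏ j ∈ A, v (n j)) * (μ Set.univ).toReal :=
  product_bound_on_gaps_general μ k t ht ht0 v hv hgap m A hA hAm n hn
end

section
/- Let λ ∈ (0,1), C > 0 and R ∈ ℕ with R ≥ 1 be such that λ + C·λ^R < 1. Then there exist C₉ > 0 and λ₆ ∈ (0,1) such that for every n ≥ 1, ∑ over all integers p ≥ 1 and all tuples (n_1, …, n_p) of naturals with n_i ≥ R for every i and n_1 + ⋯ + n_p = n, of the product ∏_{i=1}^{p} (C·λ^{n_i}), is at most C₉·λ₆^n. -/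
/-!
By continuity there is `a > λ` with `a + C a^R < 1`; write `λ = t a`, so `t < 1`. A term with
`p` parts summing to `n` equals `t^n ∏ C a^{n_i}`, and forgetting the constraint `∑ n_i = n`
bounds the `p`-part sum by `t^n θ^p` with `θ = ∑_{m ≥ R} C a^m ≤ C a^R / (1 - a) < 1`.
Summing the geometric series in `p` gives `t^n θ / (1 - θ)`.
-/

open Finset Topology

def compositionsAtLeast (R n p : ℕ) : Finset (Fin p → ℕ) :=
  (Fintype.piFinset fun _ : Fin p => range (n + 1)).filter
    (fun f => (∀ i, R ≤ f i) ∧ ∑ i, f i = n)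

lemma compositionsAtLeast_subset_piFinset (R n p : ℕ) :
    compositionsAtLeast R n p ⊆ Fintype.piFinset fun _ : Fin p => Ico R (n + 1) := by
  intro f hf
  simp only [compositionsAtLeast, mem_filter, Fintype.mem_piFinset, mem_range] at hf
  simp only [Fintype.mem_piFinset, mem_Ico]
  exact fun i => ⟨hf.2.1 i, hf.1 i⟩

lemma sum_compositionsAtLeast_prod_le_pow {g : ℕ → ℝ} (hg : ∀ m, 0 ≤ g m) (R n p : ℕ) :
    ∑ f ∈ compositionsAtLeast R n p, ∏ i, g (f i) ≤ (∑ m ∈ Ico R (n + 1), g m) ^ p := by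
  rw [sum_pow']
  exact sum_le_sum_of_subset_of_nonneg (compositionsAtLeast_subset_piFinset R n p)
    fun f _ _ => prod_nonneg fun i _ => hg (f i)

lemma prod_mul_mul_pow {M ι : Type*} [CommMonoid M] (s : Finset ι) (c t a : M) (f : ι → ℕ) :
    ∏ i ∈ s, c * (t * a) ^ f i = t ^ (∑ i ∈ s, f i) * ∏ i ∈ s, c * a ^ f i := by
  rw [← prod_pow_eq_pow_sum, ← prod_mul_distrib]
  exact prod_congr rfl fun i _ => by rw [mul_pow, mul_left_comm]

lemma sum_compositionsAtLeast_prod_le {C t a : ℝ} (hC : 0 ≤ C) (ht : 0 ≤ t) (ha0 : 0 ≤ a)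
    (ha1 : a < 1) (R n p : ℕ) :
    ∑ f ∈ compositionsAtLeast R n p, ∏ i, C * (t * a) ^ f i
      ≤ t ^ n * (C * a ^ R / (1 - a)) ^ p := by
  have hsum : ∀ f ∈ compositionsAtLeast R n p, ∑ i, f i = n :=
    fun f hf => (mem_filter.1 hf).2.2
  calc ∑ f ∈ compositionsAtLeast R n p, ∏ i, C * (t * a) ^ f i
      = t ^ n * ∑ f ∈ compositionsAtLeast R n p, ∏ i, C * a ^ f i := by
        rw [mul_sum]
        exact sum_congr rfl fun f hf => by rw [prod_mul_mul_pow, hsum f hf]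
    _ ≤ t ^ n * (∑ m ∈ Ico R (n + 1), C * a ^ m) ^ p := by
        gcongr
        exact sum_compositionsAtLeast_prod_le_pow (g := fun m => C * a ^ m)
          (fun m => by positivity) R n p
    _ ≤ t ^ n * (C * a ^ R / (1 - a)) ^ p := by
        rw [← mul_sum, mul_div_assoc]
        gcongr
        exact geom_sum_Ico_le_of_lt_one ha0 ha1

lemma exists_gt_add_mul_pow_lt_one {lam C : ℝ} {R : ℕ} (h : lam + C * lam ^ R < 1) :
    ∃ a > lam, a + C * a ^ R < 1 := by
  have hnhds : ∀ᶠ a in 𝓝 lam, a + C * a ^ R < 1 :=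
    (continuous_id.add (continuous_const.mul (continuous_pow R))).continuousAt.eventually_lt
      continuousAt_const h
  have hright : ∀ᶠ a in 𝓝[>] lam, lam < a := self_mem_nhdsWithin
  exact ((hnhds.filter_mono nhdsWithin_le_nhds).and hright).exists.imp fun a ha => ⟨ha.2, ha.1⟩

theorem composition_sum_exponential_decay_general
    (lam C : ℝ) (hlam0 : 0 < lam) (hC : 0 < C)
    (R : ℕ) (hcond : lam + C * lam ^ R < 1) :
    ∃ C₉ > 0, ∃ lam₆ ∈ Set.Ioo (0 : ℝ) 1, ∀ n : ℕ, 1 ≤ n →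
      (∑ p ∈ Finset.Icc 1 n,
        ∑ f ∈ (Fintype.piFinset fun _ : Fin p => Finset.range (n + 1)) |>.filter
            (fun f => (∀ i, R ≤ f i) ∧ ∑ i, f i = n),
          ∏ i, C * lam ^ (f i)) ≤ C₉ * lam₆ ^ n := by
  obtain ⟨a, hlam_a, ha⟩ := exists_gt_add_mul_pow_lt_one hcond
  have ha0 : 0 < a := hlam0.trans hlam_a
  have ha1 : a < 1 := by nlinarith [pow_pos ha0 R]
  set θ := C * a ^ R / (1 - a)
  have hθ0 : 0 < θ := div_pos (by positivity) (sub_pos.2 ha1)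
  have hθ1 : θ < 1 := (div_lt_one (sub_pos.2 ha1)).2 (by linarith)
  refine ⟨θ / (1 - θ), div_pos hθ0 (sub_pos.2 hθ1), lam / a,
    ⟨div_pos hlam0 ha0, (div_lt_one ha0).2 hlam_a⟩, fun n _ => ?_⟩
  have hlam : lam / a * a = lam := div_mul_cancel₀ lam ha0.ne'
  calc ∑ p ∈ Icc 1 n, ∑ f ∈ compositionsAtLeast R n p, ∏ i, C * lam ^ f i
      ≤ ∑ p ∈ Icc 1 n, (lam / a) ^ n * θ ^ p := by
        refine sum_le_sum fun p _ => ?_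
        have := sum_compositionsAtLeast_prod_le hC.le (div_pos hlam0 ha0).le ha0.le ha1 R n p
        rwa [hlam] at this
    _ = (lam / a) ^ n * ∑ p ∈ Ico 1 (n + 1), θ ^ p := by
        rw [← mul_sum, Ico_add_one_right_eq_Icc]
    _ ≤ (lam / a) ^ n * (θ ^ 1 / (1 - θ)) := by
        gcongr
        exact geom_sum_Ico_le_of_lt_one hθ0.le hθ1
    _ = θ / (1 - θ) * (lam / a) ^ n := by ring

/-- Exponential decay of a sum over compositions, established by a generating function
argument in the proof of Lemma 3.7 of Gouëzel: if `λ + C λ^R < 1` then the sum over all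
`p ≥ 1` and tuples `(n_1, …, n_p)` with `n_i ≥ R` and `∑ n_i = n` of `∏ C λ^{n_i}` is
at most `C₉ λ₆^n`. -/
theorem composition_sum_exponential_decay
    (lam C : ℝ) (hlam0 : 0 < lam) (hlam1 : lam < 1) (hC : 0 < C)
    (R : ℕ) (hR : 1 ≤ R) (hcond : lam + C * lam ^ R < 1) :
    ∃ C₉ > 0, ∃ lam₆ ∈ Set.Ioo (0 : ℝ) 1, ∀ n : ℕ, 1 ≤ n →
      (∑ p ∈ Finset.Icc 1 n,
        ∑ f ∈ (Fintype.piFinset fun _ : Fin p => Finset.range (n + 1)) |>.filter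
            (fun f => (∀ i, R ≤ f i) ∧ ∑ i, f i = n),
          ∏ i, C * lam ^ (f i)) ≤ C₉ * lam₆ ^ n :=
  composition_sum_exponential_decay_general lam C hlam0 hC R hcond
end

section
/- Let (u_n)_{n≥1} be a sequence of positive reals with polynomial decay, i.e. there exists C₀ ≥ 1 such that for all n ≥ 1 and all integers m with n/2 ≤ m ≤ n, one has 0 < u_m ≤ C₀·u_n. Assume moreover that there exist γ > 1 and C₁ > 0 with u_n ≤ C₁/n^γ for all n ≥ 1. Then there exists C₂ > 0 such that for all n ≥ 2, ∑_{p=n}^{∞} (log p)·u_p ≤ C₂·(log n)·∑_{p=n}^{∞} u_p. -/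
set_option maxHeartbeats 1000000 in
/-- Remark following Theorem 1.3 of Gouëzel: for a sequence with polynomial decay and
`u_n = O(1/n^γ)` with `γ > 1`, one has `∑_{p≥n} (log p) u_p = O((log n) ∑_{p≥n} u_p)`. -/
theorem log_tail_sum_bound
    (u : ℕ → ℝ) (C₀ : ℝ) (hC₀ : 1 ≤ C₀)
    (hpoly : ∀ n : ℕ, 1 ≤ n → ∀ m : ℕ, n ≤ 2 * m → m ≤ n → 0 < u m ∧ u m ≤ C₀ * u n)
    (γ C₁ : ℝ) (hγ : 1 < γ) (hC₁ : 0 < C₁)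
    (hbound : ∀ n : ℕ, 1 ≤ n → u n ≤ C₁ / (n : ℝ) ^ γ) :
    ∃ C₂ > 0, ∀ n : ℕ, 2 ≤ n →
      (∑' p : ℕ, if n ≤ p then Real.log p * u p else 0) ≤
        C₂ * Real.log n * (∑' p : ℕ, if n ≤ p then u p else 0) := by
  have hC₀pos : (0:ℝ) < C₀ := lt_of_lt_of_le one_pos hC₀
  have upos : ∀ n : ℕ, 1 ≤ n → 0 < u n := fun n hn => (hpoly n hn n (by omega) le_rfl).1
  -- chaining: u 1 ≤ C₀^k * u n whenever n ≤ 2^k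
  have chain : ∀ k : ℕ, ∀ n : ℕ, 1 ≤ n → n ≤ 2 ^ k → u 1 ≤ C₀ ^ k * u n := by
    intro k
    induction k with
    | zero => intro n h1 h2; interval_cases n; simp
    | succ k ih =>
      intro n h1 h2
      by_cases h : n ≤ 2 ^ k
      · have h3 := ih n h1 h
        have h4 : C₀ ^ k ≤ C₀ ^ (k+1) := pow_le_pow_right₀ hC₀ (by omega)
        have h5 := upos n h1
        nlinarith [pow_nonneg (le_of_lt hC₀pos) k]
      · have h2m : n ≤ 2 * 2 ^ k := by
          have : (2:ℕ) ^ (k+1) = 2 * 2 ^ k := by ring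
          omega
        have hm : 2 ^ k ≤ n := by omega
        have h5 := (hpoly n h1 (2 ^ k) h2m hm).2
        have h6 := ih (2 ^ k) Nat.one_le_two_pow le_rfl
        calc u 1 ≤ C₀ ^ k * u (2 ^ k) := h6
          _ ≤ C₀ ^ k * (C₀ * u n) :=
              mul_le_mul_of_nonneg_left h5 (pow_nonneg (le_of_lt hC₀pos) k)
          _ = C₀ ^ (k+1) * u n := by ring
  set α : ℝ := Real.logb 2 C₀ with hαdef
  have hα : 0 ≤ α := Real.logb_nonneg one_lt_two hC₀
  have hu1 : 0 < u 1 := upos 1 le_rfl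
  -- polynomial lower bound on u
  have hlow : ∀ n : ℕ, 1 ≤ n → u 1 * (n:ℝ) ^ (-α) ≤ C₀ * u n := by
    intro n hn
    set L := Nat.log 2 n with hL
    have hk : n ≤ 2 ^ (L + 1) := (Nat.lt_pow_succ_log_self one_lt_two n).le
    have h1 : u 1 ≤ C₀ ^ (L + 1) * u n := chain (L+1) n hn hk
    have h2L : ((2:ℝ)) ^ (L:ℕ) ≤ (n:ℝ) := by
      exact_mod_cast Nat.pow_log_le_self 2 (by omega)
    have hCL : C₀ ^ (L:ℕ) ≤ (n:ℝ) ^ α := by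
      have e1 : (C₀:ℝ) ^ (L:ℕ) = ((2:ℝ) ^ ((L:ℕ):ℝ)) ^ α := by
        rw [← Real.rpow_natCast C₀ L, ← Real.rpow_logb two_pos (by norm_num) hC₀pos,
          ← Real.rpow_mul (by norm_num), ← Real.rpow_mul (by norm_num), mul_comm]
      rw [e1, Real.rpow_natCast]
      exact Real.rpow_le_rpow (by positivity) h2L hα
    have hnpos : (0:ℝ) < (n:ℝ) := by exact_mod_cast Nat.pos_of_ne_zero (by omega)
    have hnα : (0:ℝ) < (n:ℝ) ^ α := Real.rpow_pos_of_pos hnpos α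
    have hnαneg : (0:ℝ) < (n:ℝ) ^ (-α) := Real.rpow_pos_of_pos hnpos (-α)
    have h3 : u 1 ≤ C₀ * (n:ℝ) ^ α * u n := by
      have h4 : C₀ ^ (L + 1) ≤ C₀ * (n:ℝ) ^ α := by
        calc C₀ ^ (L + 1) = C₀ * C₀ ^ (L:ℕ) := by ring
          _ ≤ C₀ * (n:ℝ) ^ α := mul_le_mul_of_nonneg_left hCL (le_of_lt hC₀pos)
      have := mul_le_mul_of_nonneg_right h4 (le_of_lt (upos n hn))
      linarith
    have hmul : (n:ℝ) ^ α * (n:ℝ) ^ (-α) = 1 := by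
      rw [← Real.rpow_add hnpos]; simp
    nlinarith [mul_le_mul_of_nonneg_right h3 (le_of_lt hnαneg), upos n hn]
  -- constants
  set δ : ℝ := (γ - 1) / 2 with hδdef
  have hδ : 0 < δ := by simp only [hδdef]; linarith
  set τ : ℝ := 1 + δ / 2 with hτdef
  have hτ : 1 < τ := by simp only [hτdef]; linarith
  have hZsummable : Summable (fun p : ℕ => 1 / (p:ℝ) ^ τ) :=
    Real.summable_one_div_nat_rpow.mpr hτ
  set Z : ℝ := ∑' p : ℕ, 1 / (p:ℝ) ^ τ with hZdef
  have hZ0 : 0 ≤ Z := tsum_nonneg fun p => by positivity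
  set B : ℕ := ⌈2 * α / δ⌉₊ + 1 with hBdef
  have hB1 : 1 ≤ B := by omega
  have hBα : α ≤ (B:ℝ) * (δ / 2) := by
    have h1 : 2 * α / δ ≤ (⌈2 * α / δ⌉₊ : ℝ) := Nat.le_ceil _
    have h2 : ((⌈2 * α / δ⌉₊ : ℕ) : ℝ) + 1 = (B:ℝ) := by simp [hBdef]
    rw [div_le_iff₀ hδ] at h1
    nlinarith
  set K : ℝ := C₁ / δ * (C₀ / u 1) * Z with hKdef
  have hK0 : 0 ≤ K := by positivity
  have hlog2 : (0:ℝ) < Real.log 2 := Real.log_pos one_lt_two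
  refine ⟨(B:ℝ) + K / Real.log 2, by positivity, fun n hn => ?_⟩
  have hn1 : 1 ≤ n := by omega
  have hnpos : (0:ℝ) < (n:ℝ) := by exact_mod_cast Nat.pos_of_ne_zero (by omega)
  have hn1R : (1:ℝ) ≤ (n:ℝ) := by exact_mod_cast hn1
  have hlogn : Real.log 2 ≤ Real.log n := Real.log_le_log two_pos (by exact_mod_cast hn)
  have hlognpos : 0 < Real.log n := lt_of_lt_of_le hlog2 hlogn
  set M : ℕ := n ^ B with hMdef
  have hnM : n ≤ M := Nat.le_self_pow (by omega) n
  -- key pointwise bound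
  have key : ∀ p : ℕ, 1 ≤ p → Real.log p * u p ≤ C₁ / δ * (p:ℝ) ^ (-(1 + δ)) := by
    intro p hp
    have hppos : (0:ℝ) < (p:ℝ) := by exact_mod_cast Nat.pos_of_ne_zero (by omega)
    have h1 : Real.log p ≤ (p:ℝ) ^ δ / δ := Real.log_le_rpow_div (le_of_lt hppos) hδ
    have h2 : u p ≤ C₁ * (p:ℝ) ^ (-γ) := by
      have := hbound p hp
      rw [Real.rpow_neg (le_of_lt hppos)]
      rw [mul_comm, ← div_eq_inv_mul]
      exact this
    have h3 : 0 ≤ Real.log p := Real.log_nonneg (by exact_mod_cast hp)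
    have h4 : 0 ≤ u p := le_of_lt (upos p hp)
    calc Real.log p * u p ≤ ((p:ℝ) ^ δ / δ) * (C₁ * (p:ℝ) ^ (-γ)) := by
          apply mul_le_mul h1 h2 h4 (by positivity)
      _ = C₁ / δ * ((p:ℝ) ^ δ * (p:ℝ) ^ (-γ)) := by ring
      _ = C₁ / δ * (p:ℝ) ^ (-(1 + δ)) := by
          rw [← Real.rpow_add hppos]
          congr 1
          congr 1
          simp only [hδdef]; ring
  -- summability of the log tail and plain tail
  have hS : Summable (fun p : ℕ => if n ≤ p then u p else 0) := by
    refine Summable.of_nonneg_of_le ?_ ?_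
      ((Real.summable_one_div_nat_rpow.mpr hγ).mul_left C₁)
    · intro p; by_cases h : n ≤ p
      · simp only [h, if_true]; exact le_of_lt (upos p (by omega))
      · simp [h]
    · intro p; by_cases h : n ≤ p
      · simp only [h, if_true]
        have := hbound p (by omega)
        rw [mul_one_div]
        exact this
      · simp only [h, if_false]; positivity
  have hind_nn : ∀ p : ℕ, 0 ≤ (if n ≤ p then u p else 0) := by
    intro p; by_cases h : n ≤ p
    · simp only [h, if_true]; exact le_of_lt (upos p (by omega))
    · simp [h]
  have hS0 : 0 ≤ ∑' p : ℕ, (if n ≤ p then u p else 0) := tsum_nonneg hind_nn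
  have hunS : u n ≤ ∑' p : ℕ, (if n ≤ p then u p else 0) := by
    have := Summable.le_tsum hS n (fun j _ => hind_nn j)
    simpa using this
  -- the dominating summable function for log-weighted terms
  have hg : Summable (fun p : ℕ => C₁ / δ * (1 / (p:ℝ) ^ τ)) := hZsummable.mul_left _
  have hbnd_ind : ∀ p : ℕ, n ≤ p → Real.log p * u p ≤ C₁ / δ * (1 / (p:ℝ) ^ τ) := by
    intro p hp
    have hp1 : 1 ≤ p := by omega
    have hppos : (0:ℝ) < (p:ℝ) := by exact_mod_cast Nat.pos_of_ne_zero (by omega)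
    have h1 := key p hp1
    have h2 : (p:ℝ) ^ (-(1 + δ)) ≤ (p:ℝ) ^ (-τ) := by
      apply Real.rpow_le_rpow_of_exponent_le (by exact_mod_cast hp1)
      simp only [hτdef]; linarith
    have h3 : (p:ℝ) ^ (-τ) = 1 / (p:ℝ) ^ τ := by
      rw [Real.rpow_neg (le_of_lt hppos), one_div]
    calc Real.log p * u p ≤ C₁ / δ * (p:ℝ) ^ (-(1 + δ)) := h1
      _ ≤ C₁ / δ * (p:ℝ) ^ (-τ) := by
          apply mul_le_mul_of_nonneg_left h2 (by positivity)
      _ = C₁ / δ * (1 / (p:ℝ) ^ τ) := by rw [h3]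
  have hT : Summable (fun p : ℕ => if n ≤ p then Real.log p * u p else 0) := by
    refine Summable.of_nonneg_of_le ?_ ?_ hg
    · intro p; by_cases h : n ≤ p
      · simp only [h, if_true]
        exact mul_nonneg (Real.log_nonneg (by exact_mod_cast (by omega : 1 ≤ p)))
          (le_of_lt (upos p (by omega)))
      · simp [h]
    · intro p; by_cases h : n ≤ p
      · simp only [h, if_true]; exact hbnd_ind p h
      · simp only [h, if_false]; positivity
  -- split the log tail at M
  set f1 : ℕ → ℝ := fun p => if n ≤ p ∧ p < M then Real.log p * u p else 0 with hf1
  set f2 : ℕ → ℝ := fun p => if M ≤ p then Real.log p * u p else 0 with hf2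
  have hf1nn : ∀ p, 0 ≤ f1 p := by
    intro p; simp only [hf1]
    by_cases h : n ≤ p ∧ p < M
    · simp only [h, if_true]
      exact mul_nonneg (Real.log_nonneg (by exact_mod_cast (by omega : 1 ≤ p)))
        (le_of_lt (upos p (by omega)))
    · simp [h]
  have hf2nn : ∀ p, 0 ≤ f2 p := by
    intro p; simp only [hf2]
    by_cases h : M ≤ p
    · simp only [h, if_true]
      exact mul_nonneg (Real.log_nonneg (by exact_mod_cast (by omega : 1 ≤ p)))
        (le_of_lt (upos p (by omega)))
    · simp [h]
  have hsplit : ∀ p : ℕ, (if n ≤ p then Real.log p * u p else 0) = f1 p + f2 p := by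
    intro p
    simp only [hf1, hf2]
    by_cases h1 : n ≤ p <;> by_cases h2 : M ≤ p
    · have : ¬ (n ≤ p ∧ p < M) := by omega
      simp [h1, h2, this]
    · have : n ≤ p ∧ p < M := by omega
      simp [h1, h2, this]
    · omega
    · have : ¬ (n ≤ p ∧ p < M) := by omega
      simp [h1, h2, this]
  have hle1 : ∀ p, f1 p ≤ (if n ≤ p then Real.log p * u p else 0) := by
    intro p
    rw [hsplit p]
    have := hf2nn p
    linarith
  have hle2 : ∀ p, f2 p ≤ (if n ≤ p then Real.log p * u p else 0) := by
    intro p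
    rw [hsplit p]
    have := hf1nn p
    linarith
  have hf1sum : Summable f1 := hT.of_nonneg_of_le hf1nn hle1
  have hf2sum : Summable f2 := hT.of_nonneg_of_le hf2nn hle2
  have hTsplit : (∑' p : ℕ, if n ≤ p then Real.log p * u p else 0) = (∑' p, f1 p) + ∑' p, f2 p := by
    rw [← Summable.tsum_add hf1sum hf2sum]
    exact tsum_congr hsplit
  -- bound for the first part
  have hlogM : Real.log M = (B:ℝ) * Real.log n := by
    simp only [hMdef]
    rw [Nat.cast_pow, Real.log_pow]
  have hA1 : (∑' p, f1 p) ≤ (B:ℝ) * Real.log n *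
      ∑' p : ℕ, (if n ≤ p then u p else 0) := by
    rw [← tsum_mul_left]
    apply Summable.tsum_le_tsum _ hf1sum (hS.mul_left _)
    intro p
    simp only [hf1]
    by_cases h1 : n ≤ p
    · by_cases h2 : p < M
      · simp only [h1, h2, and_true, if_true, true_and]
        have hpM : (p:ℝ) ≤ (M:ℝ) := by exact_mod_cast le_of_lt h2
        have hppos : (0:ℝ) < (p:ℝ) := by exact_mod_cast Nat.pos_of_ne_zero (by omega)
        have : Real.log p ≤ (B:ℝ) * Real.log n := by
          rw [← hlogM]
          exact Real.log_le_log hppos hpM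
        exact mul_le_mul_of_nonneg_right this (le_of_lt (upos p (by omega)))
      · simp only [h1, true_and, h2, if_false, if_true]
        have hup := le_of_lt (upos p (by omega))
        have h0 : (0:ℝ) ≤ (B:ℝ) * Real.log n := by positivity
        exact mul_nonneg h0 hup
    · have : ¬ (n ≤ p ∧ p < M) := by omega
      simp [this, h1]
  -- bound for the second part
  have hMpos : (0:ℝ) < (M:ℝ) := by
    have : 1 ≤ M := by omega
    exact_mod_cast Nat.pos_of_ne_zero (by omega)
  have hA2 : (∑' p, f2 p) ≤ C₁ / δ * (M:ℝ) ^ (-(δ/2)) * Z := by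
    rw [hZdef, ← tsum_mul_left]
    apply Summable.tsum_le_tsum _ hf2sum ((hZsummable.mul_left _))
    intro p
    simp only [hf2]
    by_cases h : M ≤ p
    · simp only [h, if_true]
      have hp1 : 1 ≤ p := by omega
      have hppos : (0:ℝ) < (p:ℝ) := by exact_mod_cast Nat.pos_of_ne_zero (by omega)
      have hMp : (M:ℝ) ≤ (p:ℝ) := by exact_mod_cast h
      have h1 := key p hp1
      have h2 : (p:ℝ) ^ (-(1 + δ)) = (p:ℝ) ^ (-(δ/2)) * (p:ℝ) ^ (-τ) := by
        rw [← Real.rpow_add hppos]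
        congr 1
        simp only [hτdef]; ring
      have h3 : (p:ℝ) ^ (-(δ/2)) ≤ (M:ℝ) ^ (-(δ/2)) := by
        rw [Real.rpow_neg (le_of_lt hppos), Real.rpow_neg (le_of_lt hMpos)]
        apply inv_anti₀ (Real.rpow_pos_of_pos hMpos _)
        exact Real.rpow_le_rpow (le_of_lt hMpos) hMp (by positivity)
      have h4 : (p:ℝ) ^ (-τ) = 1 / (p:ℝ) ^ τ := by
        rw [Real.rpow_neg (le_of_lt hppos), one_div]
      calc Real.log p * u p ≤ C₁ / δ * (p:ℝ) ^ (-(1 + δ)) := h1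
        _ = C₁ / δ * ((p:ℝ) ^ (-(δ/2)) * (p:ℝ) ^ (-τ)) := by rw [h2]
        _ ≤ C₁ / δ * ((M:ℝ) ^ (-(δ/2)) * (p:ℝ) ^ (-τ)) := by
            apply mul_le_mul_of_nonneg_left _ (by positivity)
            exact mul_le_mul_of_nonneg_right h3 (by positivity)
        _ = C₁ / δ * (M:ℝ) ^ (-(δ/2)) * (1 / (p:ℝ) ^ τ) := by rw [h4]; ring
    · simp only [h, if_false]
      positivity
  -- (M:ℝ)^(-(δ/2)) ≤ (n:ℝ)^(-α)
  have hMα : (M:ℝ) ^ (-(δ/2)) ≤ (n:ℝ) ^ (-α) := by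
    have e1 : (M:ℝ) = (n:ℝ) ^ ((B:ℕ):ℝ) := by
      simp only [hMdef]
      rw [Nat.cast_pow, Real.rpow_natCast]
    rw [e1, ← Real.rpow_mul (le_of_lt hnpos)]
    apply Real.rpow_le_rpow_of_exponent_le hn1R
    have : α ≤ (B:ℝ) * (δ/2) := hBα
    nlinarith
  have hA2' : (∑' p, f2 p) ≤ K * ∑' p : ℕ, (if n ≤ p then u p else 0) := by
    have step1 : C₁ / δ * (M:ℝ) ^ (-(δ/2)) * Z ≤ C₁ / δ * (n:ℝ) ^ (-α) * Z := by
      have := mul_le_mul_of_nonneg_left hMα (by positivity : (0:ℝ) ≤ C₁ / δ)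
      exact mul_le_mul_of_nonneg_right this hZ0
    have step2 : (n:ℝ) ^ (-α) ≤ C₀ / u 1 * u n := by
      have h := hlow n hn1
      have e : C₀ / u 1 * u 1 = C₀ := div_mul_cancel₀ C₀ (ne_of_gt hu1)
      nlinarith [h, hu1, e]
    have step3 : C₁ / δ * (n:ℝ) ^ (-α) * Z ≤ C₁ / δ * (C₀ / u 1 * u n) * Z := by
      have := mul_le_mul_of_nonneg_left step2 (by positivity : (0:ℝ) ≤ C₁ / δ)
      exact mul_le_mul_of_nonneg_right this hZ0
    have step4 : C₁ / δ * (C₀ / u 1 * u n) * Z = K * u n := by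
      simp only [hKdef]; ring
    have step5 : K * u n ≤ K * ∑' p : ℕ, (if n ≤ p then u p else 0) :=
      mul_le_mul_of_nonneg_left hunS hK0
    linarith [hA2]
  -- combine
  rw [hTsplit]
  have hKS : K * (∑' p : ℕ, (if n ≤ p then u p else 0)) ≤
      K / Real.log 2 * Real.log n * ∑' p : ℕ, (if n ≤ p then u p else 0) := by
    apply mul_le_mul_of_nonneg_right _ hS0
    rw [div_mul_eq_mul_div, le_div_iff₀ hlog2]
    exact mul_le_mul_of_nonneg_left hlogn hK0
  have := hA1
  have := hA2'
  have goal_eq : ((B:ℝ) + K / Real.log 2) * Real.log n *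
      (∑' p : ℕ, (if n ≤ p then u p else 0)) =
      (B:ℝ) * Real.log n * (∑' p : ℕ, (if n ≤ p then u p else 0)) +
      K / Real.log 2 * Real.log n * (∑' p : ℕ, (if n ≤ p then u p else 0)) := by ring
  rw [goal_eq]
  linarith
end

section
/- Let A, c₁, c₂ be reals with c₁ < c₂ ≤ A, and set θ = (c₂ − c₁)/(A − c₁). Let n ≥ 1 and let a_0, …, a_{n−1} be reals with a_i ≤ A for every i and ∑_{i=0}^{n−1} a_i ≥ c₂·n. Then there exist an integer l with l ≥ θ·n and integers 1 ≤ p_1 < ⋯ < p_l ≤ n such that for every 1 ≤ j ≤ l and every 1 ≤ k ≤ p_j, ∑_{s=p_j−k}^{p_j−1} a_s ≥ c₁·k. -/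
/-!
Put `T m = ∑_{i<m} aᵢ - c₁ m`, so that `T` grows by at most `A - c₁` per step and
`T n - T 0 ≥ (c₂ - c₁) n`. Call `p` a record time if `T m ≤ T p` for all `m < p`. A value
of `T` exceeding all earlier ones is attained at a record time and exceeds the previous value
by at most `A - c₁`, so `T n - T 0 ≤ (A - c₁) · #records`: there are at least `θ n` record
times. At a record time `p`, the inequality `T (p - k) ≤ T p` is exactly
`∑_{s=p-k}^{p-1} aₛ ≥ c₁ k`.
-/

open Finset

section Records

variable {α : Type*} [LinearOrder α]

def recordTimes (T : ℕ → α) (n : ℕ) : Finset ℕ :=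
  (Icc 1 n).filter fun p => ∀ m < p, T m ≤ T p

lemma recordTimes_succ (T : ℕ → α) (n : ℕ) :
    recordTimes T (n + 1) =
      if ∀ m < n + 1, T m ≤ T (n + 1) then insert (n + 1) (recordTimes T n)
      else recordTimes T n := by
  unfold recordTimes
  rw [← insert_Icc_right_eq_Icc_add_one (by omega), filter_insert]

lemma le_add_card_recordTimes_nsmul [AddCommMonoid α] [IsOrderedAddMonoid α]
    {T : ℕ → α} {D : α} (hD : 0 ≤ D) {n : ℕ} (hstep : ∀ m < n, T (m + 1) ≤ T m + D) :
    ∀ m ≤ n, T m ≤ T 0 + #(recordTimes T n) • D := by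
  induction n with
  | zero => intro m hm; simp [Nat.le_zero.mp hm, recordTimes]
  | succ n ih =>
    have hstep' : ∀ m < n, T (m + 1) ≤ T m + D := fun m hm => hstep m (by omega)
    have hmono : #(recordTimes T n) • D ≤ #(recordTimes T (n + 1)) • D := by
      refine nsmul_le_nsmul_left hD (card_le_card ?_)
      rw [recordTimes_succ]
      split_ifs
      exacts [subset_insert _ _, subset_rfl]
    intro m hm
    rcases Nat.lt_succ_iff_lt_or_eq.mp (Nat.lt_succ_of_le hm) with hm | rfl
    · exact (ih hstep' m (by omega)).trans
        (add_le_add_right hmono _)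
    by_cases hrec : ∀ m < n + 1, T m ≤ T (n + 1)
    · have hnew : n + 1 ∉ recordTimes T n := by simp [recordTimes]
      rw [recordTimes_succ, if_pos hrec, card_insert_of_notMem hnew, succ_nsmul, ← add_assoc]
      exact (hstep n (by omega)).trans (add_le_add_left (ih hstep' n le_rfl) D)
    · obtain ⟨m, hm, hlt⟩ := not_forall₂.mp hrec
      calc T (n + 1) ≤ T m := (not_le.mp hlt).le
        _ ≤ T 0 + #(recordTimes T n) • D := ih hstep' m (by omega)
        _ ≤ T 0 + #(recordTimes T (n + 1)) • D := add_le_add_right hmono _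

end Records

lemma mul_le_sum_Ico_of_forall_le {a : ℕ → ℝ} {c : ℝ} {p : ℕ}
    (hrec : ∀ m < p, ∑ i ∈ range m, a i - c * m ≤ ∑ i ∈ range p, a i - c * p) {k : ℕ}
    (hk : k ≤ p) : c * k ≤ ∑ s ∈ Ico (p - k) p, a s := by
  rcases Nat.eq_zero_or_pos k with rfl | hk0
  · simp
  have := hrec (p - k) (by omega)
  rw [sum_Ico_eq_sub a (Nat.sub_le p k), Nat.cast_sub hk] at *
  linarith

lemma exists_strictMonoOn_Icc_mem (s : Finset ℕ) :
    ∃ p : ℕ → ℕ, StrictMonoOn p (Set.Icc 1 #s) ∧ ∀ j, 1 ≤ j → j ≤ #s → p j ∈ s := by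
  let e := s.orderEmbOfFin rfl
  refine ⟨fun j => if h : j - 1 < #s then e ⟨j - 1, h⟩ else 0, ?_, ?_⟩
  · rintro i ⟨hi1, his⟩ j ⟨hj1, hjs⟩ hij
    simp only [dif_pos (show i - 1 < #s by omega), dif_pos (show j - 1 < #s by omega)]
    exact e.strictMono (Fin.mk_lt_mk.mpr (by omega))
  · intro j hj1 hjs
    simp only [dif_pos (show j - 1 < #s by omega)]
    exact s.orderEmbOfFin_mem rfl _

theorem pliss_lemma_general
    (A c₁ c₂ : ℝ) (h12 : c₁ < c₂) (h2A : c₂ ≤ A)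
    (n : ℕ) (a : ℕ → ℝ) (ha : ∀ i < n, a i ≤ A)
    (hsum : c₂ * n ≤ ∑ i ∈ Finset.range n, a i) :
    ∃ l : ℕ, ((c₂ - c₁) / (A - c₁)) * n ≤ l ∧ ∃ p : ℕ → ℕ,
      StrictMonoOn p (Set.Icc 1 l) ∧
      (∀ j, 1 ≤ j → j ≤ l → 1 ≤ p j ∧ p j ≤ n) ∧
      ∀ j, 1 ≤ j → j ≤ l → ∀ k, 1 ≤ k → k ≤ p j →
        c₁ * k ≤ ∑ s ∈ Finset.Ico (p j - k) (p j), a s := by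
  set T : ℕ → ℝ := fun m => ∑ i ∈ range m, a i - c₁ * m
  set E := recordTimes T n
  have hAc : 0 < A - c₁ := by linarith
  have hstep : ∀ m < n, T (m + 1) ≤ T m + (A - c₁) := by
    intro m hm
    simp only [T, sum_range_succ, Nat.cast_succ]
    linarith [ha m hm]
  have hcount : (c₂ - c₁) * n ≤ (A - c₁) * #E := by
    have := le_add_card_recordTimes_nsmul hAc.le hstep n le_rfl
    simp only [T, nsmul_eq_mul, sum_range_zero, CharP.cast_eq_zero] at this
    linarith
  obtain ⟨p, hmono, hpE⟩ := exists_strictMonoOn_Icc_mem E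
  refine ⟨#E, ?_, p, hmono, fun j hj1 hjl => ?_, fun j hj1 hjl k _ hk => ?_⟩
  · rwa [div_mul_eq_mul_div, div_le_iff₀ hAc, mul_comm _ (A - c₁)]
  · simpa using (mem_filter.mp (hpE j hj1 hjl)).1
  · exact mul_le_sum_Ico_of_forall_le (mem_filter.mp (hpE j hj1 hjl)).2 hk

/-- The Pliss lemma on the density of hyperbolic-like times for real sequences bounded
above (the key combinatorial tool behind Lemmas 2.1 and 2.2 of Gouëzel). -/
theorem pliss_lemma
    (A c₁ c₂ : ℝ) (h12 : c₁ < c₂) (h2A : c₂ ≤ A)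
    (n : ℕ) (hn : 1 ≤ n) (a : ℕ → ℝ) (ha : ∀ i < n, a i ≤ A)
    (hsum : c₂ * n ≤ ∑ i ∈ Finset.range n, a i) :
    ∃ l : ℕ, ((c₂ - c₁) / (A - c₁)) * n ≤ l ∧ ∃ p : ℕ → ℕ,
      StrictMonoOn p (Set.Icc 1 l) ∧
      (∀ j, 1 ≤ j → j ≤ l → 1 ≤ p j ∧ p j ≤ n) ∧
      ∀ j, 1 ≤ j → j ≤ l → ∀ k, 1 ≤ k → k ≤ p j →
        c₁ * k ≤ ∑ s ∈ Finset.Ico (p j - k) (p j), a s :=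
  pliss_lemma_general A c₁ c₂ h12 h2A n a ha hsum
end

section
/- Let ε ∈ (0,1), let n ≥ 1, and let c_0, …, c_{n−1} be nonnegative reals with (1/n)·∑_{k=0}^{n−1} c_k ≤ 2ε. Then there exist an integer l with l ≥ (1 − √ε)·n and integers 1 ≤ p_1 < ⋯ < p_l ≤ n such that for every 1 ≤ j ≤ l and every 1 ≤ k ≤ p_j, ∑_{s=p_j−k}^{p_j−1} c_s ≤ 2√ε·k. -/
/-- A Pliss-type density lemma for nonnegative sequences with small average
([ABV00, Lemma 3.1], used in the proof of Lemma 2.1 of Gouëzel). -/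
theorem pliss_lemma_small_average
    (ε : ℝ) (hε0 : 0 < ε) (hε1 : ε < 1) (n : ℕ) (hn : 1 ≤ n)
    (c : ℕ → ℝ) (hc : ∀ i < n, 0 ≤ c i)
    (hsum : (∑ k ∈ Finset.range n, c k) / n ≤ 2 * ε) :
    ∃ l : ℕ, (1 - Real.sqrt ε) * n ≤ l ∧ ∃ p : ℕ → ℕ,
      StrictMonoOn p (Set.Icc 1 l) ∧
      (∀ j, 1 ≤ j → j ≤ l → 1 ≤ p j ∧ p j ≤ n) ∧
      ∀ j, 1 ≤ j → j ≤ l → ∀ k, 1 ≤ k → k ≤ p j →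
        ∑ s ∈ Finset.Ico (p j - k) (p j), c s ≤ 2 * Real.sqrt ε * k := by
  classical
  set t := Real.sqrt ε with ht
  have ht0 : 0 < t := Real.sqrt_pos.mpr hε0
  have htt : t * t = ε := Real.mul_self_sqrt hε0.le
  set σ : ℝ := 2 * t with hσdef
  have hσ0 : 0 < σ := by positivity
  set S : ℕ → ℝ := fun m => (∑ i ∈ Finset.range m, c i) - σ * m with hSdef
  set G : Finset ℕ := (Finset.Icc 1 n).filter (fun p => ∀ q < p, S p ≤ S q) with hGdef
  set l := G.card with hl
  -- key induction: S is bounded below by -σ * (number of good indices so far)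
  have key : ∀ p, p ≤ n → ∀ q, q ≤ p →
      -σ * (((G.filter (fun x => x ≤ p)).card : ℕ) : ℝ) ≤ S q := by
    intro p
    induction p with
    | zero =>
      intro _ q hq
      interval_cases q
      have h0 : S 0 = 0 := by simp [hSdef]
      rw [h0]
      have : (0:ℝ) ≤ (((G.filter (fun x => x ≤ 0)).card : ℕ) : ℝ) := by positivity
      nlinarith
    | succ p ih =>
      intro hpn q hq
      have hp : p ≤ n := Nat.le_of_succ_le hpn
      have ihp := ih hp
      have hsubcard : (((G.filter (fun x => x ≤ p)).card : ℕ) : ℝ)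
          ≤ (((G.filter (fun x => x ≤ p+1)).card : ℕ) : ℝ) := by
        have : (G.filter (fun x => x ≤ p)).card ≤ (G.filter (fun x => x ≤ p+1)).card := by
          apply Finset.card_le_card
          intro x hx
          rcases Finset.mem_filter.mp hx with ⟨h2, h3⟩
          exact Finset.mem_filter.mpr ⟨h2, by omega⟩
        exact_mod_cast this
      rcases Nat.lt_succ_iff_lt_or_eq.mp (Nat.lt_succ_of_le hq) with h1 | h1
      · have := ihp q (by omega)
        nlinarith
      · subst h1
        by_cases h : ∀ r, r ≤ p → S (p+1) ≤ S r
        · -- p+1 is a good index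
          have hgood : p + 1 ∈ G := by
            rw [hGdef, Finset.mem_filter, Finset.mem_Icc]
            exact ⟨⟨Nat.le_add_left 1 p, hpn⟩, fun q hq => h q (by omega)⟩
          have hcard : (((G.filter (fun x => x ≤ p)).card : ℕ) : ℝ) + 1
              ≤ (((G.filter (fun x => x ≤ p+1)).card : ℕ) : ℝ) := by
            have hsub : insert (p+1) (G.filter (fun x => x ≤ p)) ⊆ G.filter (fun x => x ≤ p+1) := by
              intro x hx
              rcases Finset.mem_insert.mp hx with h1 | h1
              · subst h1; exact Finset.mem_filter.mpr ⟨hgood, le_refl _⟩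
              · rcases Finset.mem_filter.mp h1 with ⟨h2, h3⟩
                exact Finset.mem_filter.mpr ⟨h2, by omega⟩
            have hnotmem : p + 1 ∉ G.filter (fun x => x ≤ p) := by
              intro habs
              exact absurd (Finset.mem_filter.mp habs).2 (by omega)
            have := Finset.card_le_card hsub
            rw [Finset.card_insert_of_notMem hnotmem] at this
            exact_mod_cast this
          have hSstep : S (p+1) = S p + c p - σ := by
            simp only [hSdef, Finset.sum_range_succ]
            push_cast
            ring
          have hcp : 0 ≤ c p := hc p (by omega)
          have hSp := ihp p le_rfl
          rw [hSstep]
          nlinarith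
        · push_neg at h
          obtain ⟨r, hr, hSr⟩ := h
          have := ihp r hr
          nlinarith
  -- apply at p = q = n
  have hGfull : G.filter (fun x => x ≤ n) = G := by
    apply Finset.filter_true_of_mem
    intro x hx
    rw [hGdef, Finset.mem_filter, Finset.mem_Icc] at hx
    exact hx.1.2
  have hkeyn := key n le_rfl n le_rfl
  rw [hGfull] at hkeyn
  have hsumn : (∑ k ∈ Finset.range n, c k) ≤ 2 * ε * n := by
    have hn0 : (0:ℝ) < n := by exact_mod_cast hn
    rw [div_le_iff₀ hn0] at hsum
    linarith
  have hSnval : S n = (∑ k ∈ Finset.range n, c k) - σ * n := rfl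
  have hlb : -σ * (l : ℝ) ≤ 2 * ε * n - σ * n := by
    calc -σ * (l:ℝ) ≤ S n := hkeyn
      _ ≤ 2 * ε * n - σ * n := by rw [hSnval]; linarith
  have hln : (1 - t) * n ≤ (l : ℝ) := by
    have hn0 : (0:ℝ) < n := by exact_mod_cast hn
    nlinarith [hlb, hσ0, ht0]
  -- enumerate G in increasing order
  set e := G.orderEmbOfFin rfl with he
  set p : ℕ → ℕ := fun j => if h : j - 1 < l then e ⟨j - 1, h⟩ else 0 with hp
  have hpval : ∀ j, 1 ≤ j → j ≤ l → ∃ h : j - 1 < l, p j = e ⟨j - 1, h⟩ := by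
    intro j h1 h2
    have h3 : j - 1 < l := by omega
    exact ⟨h3, by simp [hp, h3]⟩
  have hpG : ∀ j, 1 ≤ j → j ≤ l → p j ∈ G := by
    intro j h1 h2
    obtain ⟨h3, h4⟩ := hpval j h1 h2
    rw [h4]
    exact G.orderEmbOfFin_mem rfl _
  refine ⟨l, hln, p, ?_, ?_, ?_⟩
  · intro a ha b hb hab
    rw [Set.mem_Icc] at ha hb
    obtain ⟨h3, h4⟩ := hpval a ha.1 ha.2
    obtain ⟨h5, h6⟩ := hpval b hb.1 hb.2
    rw [h4, h6]
    exact e.strictMono (by rw [Fin.mk_lt_mk]; omega)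
  · intro j h1 h2
    have := hpG j h1 h2
    rw [hGdef, Finset.mem_filter, Finset.mem_Icc] at this
    exact this.1
  · intro j h1 h2 k hk1 hk2
    have hmem := hpG j h1 h2
    rw [hGdef, Finset.mem_filter] at hmem
    have hgood := hmem.2
    have hlt : p j - k < p j := by omega
    have hSle : S (p j) ≤ S (p j - k) := hgood _ hlt
    have hsub : p j - k ≤ p j := Nat.sub_le _ _
    have hsplit : ∑ s ∈ Finset.Ico (p j - k) (p j), c s
        = (∑ s ∈ Finset.range (p j), c s) - ∑ s ∈ Finset.range (p j - k), c s := by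
      rw [Finset.sum_Ico_eq_sub _ hsub]
    have hcast : ((p j - k : ℕ) : ℝ) = (p j : ℝ) - (k : ℝ) := by
      rw [Nat.cast_sub hk2]
    have hexp : (∑ s ∈ Finset.range (p j), c s) - ∑ s ∈ Finset.range (p j - k), c s
        = (S (p j) - S (p j - k)) + σ * k := by
      simp only [hSdef]
      rw [hcast]
      ring
    rw [hsplit, hexp]
    have hfin : σ * (k : ℝ) = 2 * Real.sqrt ε * k := by rw [hσdef, ht]
    linarith [hfin.le, hfin.ge]
end
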